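/- arXiv:2305.00825 — 4 statements merged into one kernel-verified Lean document; each statement's English description precedes it below -/
import Mathlib

section
/- For n ≥ 2, let S_n = {i² : 0 ≤ i ≤ n−1} ⊆ ℝ (so |S_n| = n) and let Γ_quad,n = S_n × S_n ⊆ ℝ². Then for every ε > 0 there exists N such that for all integers n ≥ N and k ≥ N, (3/2 − ε) · k(n−1) ≤ cov_k(Γ_quad,n) ≤ (3/2 + ε) · k(n−1). -/
open scoped Classical

/-- An affine line in `ℝ²`, given by the equation `a * x + b * y = c` with `(a, b) ≠ (0, 0)`. -/
structure Line2 where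
  a : ℝ
  b : ℝ
  c : ℝ
  nondeg : a ≠ 0 ∨ b ≠ 0

/-- Membership of a point on a line. -/
def Line2.Mem (l : Line2) (p : ℝ × ℝ) : Prop :=
  l.a * p.1 + l.b * p.2 = l.c

/-- `L` is a `k`-cover of `Γ`: a multiset of lines, none through the origin, such that
every point of `Γ` other than the origin lies on at least `k` lines (with multiplicity). -/
def IsKCover (Γ : Set (ℝ × ℝ)) (k : ℕ) (L : Multiset Line2) : Prop :=
  (∀ l ∈ L, ¬ l.Mem (0, 0)) ∧
    ∀ p ∈ Γ, p ≠ (0, 0) → k ≤ (L.filter (fun l => l.Mem p)).card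

/-- The minimum cardinality of a `k`-cover of `Γ`. -/
noncomputable def cov (Γ : Set (ℝ × ℝ)) (k : ℕ) : ℕ :=
  sInf {m | ∃ L : Multiset Line2, IsKCover Γ k L ∧ Multiset.card L = m}

/-- The set `{i² : 0 ≤ i ≤ n-1} ⊆ ℝ`. -/
noncomputable def quadSet (n : ℕ) : Finset ℝ :=
  (Finset.range n).image (fun i => ((i : ℝ)) ^ 2)


open Finset

lemma quadSet_mem_iff (n : ℕ) (x : ℝ) : x ∈ quadSet n ↔ ∃ m : ℕ, m < n ∧ x = ((m:ℝ))^2 := by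
  rw [quadSet]
  simp only [Finset.mem_image]
  constructor
  · rintro ⟨y, hy, rfl⟩
    simp at hy
    obtain ⟨m, hm, rfl⟩ := hy
    exact ⟨m, hm, rfl⟩
  · rintro ⟨m, hm, rfl⟩
    exact ⟨(m:ℝ), by simp [hm], rfl⟩

lemma quad_three_roots {A B C x y z : ℝ} (hxy : x ≠ y) (hyz : y ≠ z) (hxz : x ≠ z)
    (h1 : A*x^2 + B*x + C = 0) (h2 : A*y^2 + B*y + C = 0) (h3 : A*z^2 + B*z + C = 0) :
    A = 0 ∧ B = 0 ∧ C = 0 := by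
  have e1 : A*(x+y) + B = 0 := by
    have hxy' : x - y ≠ 0 := sub_ne_zero.mpr hxy
    have h : (x - y) * (A*(x+y) + B) = 0 := by ring_nf; linarith [h1, h2]
    exact (mul_eq_zero.mp h).resolve_left hxy'
  have e2 : A*(y+z) + B = 0 := by
    have hyz' : y - z ≠ 0 := sub_ne_zero.mpr hyz
    have h : (y - z) * (A*(y+z) + B) = 0 := by ring_nf; linarith [h2, h3]
    exact (mul_eq_zero.mp h).resolve_left hyz'
  have hA : A = 0 := by
    have hxz' : x - z ≠ 0 := sub_ne_zero.mpr hxz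
    have h : A * (x - z) = 0 := by linarith
    exact (mul_eq_zero.mp h).resolve_right hxz'
  have hB : B = 0 := by rw [hA] at e1; linarith
  have hC : C = 0 := by rw [hA, hB] at h1; linarith
  exact ⟨hA, hB, hC⟩

lemma conic_line_three {a b c p q : ℝ} (ha : a ≠ 0) (hb : b ≠ 0) (hc : c ≠ 0)
    (hp : 0 < p) {x1 y1 x2 y2 x3 y3 : ℝ}
    (hx1 : 0 ≤ x1)
    (h12 : x1 ≠ x2) (h23 : x2 ≠ x3) (h13 : x1 ≠ x3)
    (c1 : a*x1^2 + b*y1^2 = c) (c2 : a*x2^2 + b*y2^2 = c) (c3 : a*x3^2 + b*y3^2 = c)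
    (l1 : 2*a*p*x1 + 2*b*q*y1 = -(a*p^2 + b*q^2))
    (l2 : 2*a*p*x2 + 2*b*q*y2 = -(a*p^2 + b*q^2))
    (l3 : 2*a*p*x3 + 2*b*q*y3 = -(a*p^2 + b*q^2)) : False := by
  by_cases hq : q = 0
  · subst hq
    have h1 : a * (2*p*x1 + p^2) = 0 := by ring_nf; ring_nf at l1; linarith
    have h2 : 2*p*x1 + p^2 = 0 := (mul_eq_zero.mp h1).resolve_left ha
    nlinarith
  · set β : ℝ := -(a*p)/(b*q) with hβ
    set α : ℝ := -(a*p^2 + b*q^2)/(2*b*q) with hα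
    have hbq : (2*b*q) ≠ 0 := by
      apply mul_ne_zero (mul_ne_zero two_ne_zero hb) hq
    have key : (2*b*q)*(α + β*0) = -(a*p^2+b*q^2) := by rw [hα, hβ]; field_simp; ring
    have hy : ∀ x y : ℝ, 2*a*p*x + 2*b*q*y = -(a*p^2 + b*q^2) → y = α + β*x := by
      intro x y h
      have hrhs : (2*b*q)*(α + β*x) = -(a*p^2+b*q^2) - 2*a*p*x := by
        rw [hα, hβ]; field_simp; ring
      apply mul_left_cancel₀ hbq
      linarith
    have hy1 := hy _ _ l1
    have hy2 := hy _ _ l2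
    have hy3 := hy _ _ l3
    have q1 : (a + b*β^2)*x1^2 + (2*b*α*β)*x1 + (b*α^2 - c) = 0 := by
      rw [hy1] at c1; ring_nf; ring_nf at c1; linarith
    have q2 : (a + b*β^2)*x2^2 + (2*b*α*β)*x2 + (b*α^2 - c) = 0 := by
      rw [hy2] at c2; ring_nf; ring_nf at c2; linarith
    have q3 : (a + b*β^2)*x3^2 + (2*b*α*β)*x3 + (b*α^2 - c) = 0 := by
      rw [hy3] at c3; ring_nf; ring_nf at c3; linarith
    obtain ⟨hA, hB, hC⟩ := quad_three_roots h12 h23 h13 q1 q2 q3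
    have hα0 : α ≠ 0 := by
      intro h0
      rw [h0] at hC
      simp at hC
      exact hc hC
    have hβ0 : β = 0 := (mul_eq_zero.mp hB).resolve_left
      (mul_ne_zero (mul_ne_zero two_ne_zero hb) hα0)
    rw [hβ0] at hA
    simp at hA
    exact ha hA


lemma natsq_inj {i j : ℕ} (h : ((i:ℝ))^2 = ((j:ℝ))^2) : i = j := by
  have h' : ((i^2 : ℕ) : ℝ) = ((j^2 : ℕ) : ℝ) := by push_cast; exact h
  exact Nat.pow_left_injective two_ne_zero (Nat.cast_inj.mp h')


lemma natsq_lt_of_lt {i j : ℕ} (h : i < j) : ((i:ℝ))^2 < ((j:ℝ))^2 := by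
  have h' : (i:ℝ) < j := by exact_mod_cast h
  nlinarith [Nat.cast_nonneg (α := ℝ) i]

lemma natsq_lt {i j : ℕ} (h : ((i:ℝ))^2 < ((j:ℝ))^2) : i < j := by
  by_contra hc
  push_neg at hc
  rcases Nat.lt_or_ge j i with h' | h'
  · exact absurd (natsq_lt_of_lt h') (by linarith)
  · have : i = j := le_antisymm (by omega) (by omega)
    subst this
    exact lt_irrefl _ h

section slant
variable {n R : ℕ} {a b c : ℝ}

lemma slant_count (n R : ℕ) (hR : 1 ≤ R) (ha : a ≠ 0) (hb : b ≠ 0) (hc : c ≠ 0) :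
    ((Finset.range n ×ˢ Finset.range n).filter
      (fun q : ℕ × ℕ => a*(q.1:ℝ)^2 + b*(q.2:ℝ)^2 = c)).card ≤ 2*R*(2*R+1) + 1 + 2*n/R := by
  set T := ((Finset.range n ×ˢ Finset.range n).filter
      (fun q : ℕ × ℕ => a*(q.1:ℝ)^2 + b*(q.2:ℝ)^2 = c)) with hT
  have hmemT : ∀ i j : ℕ, (i,j) ∈ T ↔ (i < n ∧ j < n) ∧ a*(i:ℝ)^2 + b*(j:ℝ)^2 = c := by
    intro i j
    simp only [hT, Finset.mem_filter, Finset.mem_product, Finset.mem_range]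
  have huniq : ∀ i j j' : ℕ, (i,j) ∈ T → (i,j') ∈ T → j = j' := by
    intro i j j' h1 h2
    rw [hmemT] at h1 h2
    apply natsq_inj
    have h0 : b * ((j:ℝ)^2 - (j':ℝ)^2) = 0 := by linarith [h1.2, h2.2]
    have := (mul_eq_zero.mp h0).resolve_left hb
    linarith
  set A := T.image Prod.fst with hA
  set M := T.card with hMdef
  have hMA : A.card = M := by
    rw [hA, hMdef]
    apply Finset.card_image_of_injOn
    intro x hx y hy hxy
    have hx2 : (x.1, x.2) ∈ T := by simpa using hx
    have hy2 : (x.1, y.2) ∈ T := by rw [hxy]; simpa using hy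
    have := huniq x.1 x.2 y.2 hx2 hy2
    exact Prod.ext hxy this
  rcases Nat.eq_zero_or_pos M with hM0 | hM0
  · exact le_of_eq_of_le hM0 (Nat.zero_le _)
  classical
  set E : ℕ → ℕ := fun t => if h : t < M then A.orderEmbOfFin hMA ⟨t, h⟩ else 0 with hE
  have hEmem : ∀ t, t < M → E t ∈ A := by
    intro t ht
    simp only [hE, dif_pos ht]
    exact Finset.orderEmbOfFin_mem A hMA ⟨t, ht⟩
  have hEmono : ∀ s t, s < t → t < M → E s < E t := by
    intro s t hst ht
    have hs : s < M := lt_trans hst ht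
    simp only [hE, dif_pos ht, dif_pos hs]
    exact (A.orderEmbOfFin hMA).strictMono (show (⟨s,hs⟩ : Fin M) < ⟨t,ht⟩ from hst)
  set J : ℕ → ℕ := fun i => if h : ∃ j, (i, j) ∈ T then h.choose else 0 with hJ
  have hJmem : ∀ i, i ∈ A → (i, J i) ∈ T := by
    intro i hi
    rw [hA, Finset.mem_image] at hi
    obtain ⟨q, hq, rfl⟩ := hi
    have hex : ∃ j, (q.1, j) ∈ T := ⟨q.2, by simpa using hq⟩
    simp only [hJ, dif_pos hex]
    exact hex.choose_spec
  -- membership facts for points on curve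
  have hPmem : ∀ t, t < M → ((E t) < n ∧ (J (E t)) < n) ∧
      a*((E t:ℕ):ℝ)^2 + b*((J (E t):ℕ):ℝ)^2 = c := by
    intro t ht
    exact (hmemT _ _).mp (hJmem _ (hEmem t ht))

  set jv : ℕ → ℕ := fun t => J (E t) with hjv
  have hb2 : (0:ℝ) < b^2 := by positivity
  have key : ∀ s t, s < t → t < M →
      b*((jv t : ℝ)^2 - (jv s : ℝ)^2) = -(a*((E t : ℝ)^2 - (E s : ℝ)^2)) := by
    intro s t hst ht
    have hs : s < M := lt_trans hst ht
    have c1 := (hPmem s hs).2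
    have c2 := (hPmem t ht).2
    simp only [hjv]
    linarith
  have hEsq : ∀ s t, s < t → t < M → ((E s : ℝ))^2 < ((E t : ℝ))^2 := by
    intro s t hst ht
    exact natsq_lt_of_lt (hEmono s t hst ht)
  have hmono : (∀ s t, s < t → t < M → jv s < jv t) ∨
      (∀ s t, s < t → t < M → jv t < jv s) := by
    rcases lt_trichotomy (a*b) 0 with hab | hab | hab
    · left
      intro s t hst ht
      apply natsq_lt
      have h1 : b^2*((jv t : ℝ)^2 - (jv s : ℝ)^2)
          = (-(a*b))*((E t : ℝ)^2 - (E s : ℝ)^2) := by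
        linear_combination b * (key s t hst ht)
      nlinarith [hEsq s t hst ht]
    · exact absurd hab (mul_ne_zero ha hb)
    · right
      intro s t hst ht
      apply natsq_lt
      have h1 : b^2*((jv t : ℝ)^2 - (jv s : ℝ)^2)
          = (-(a*b))*((E t : ℝ)^2 - (E s : ℝ)^2) := by
        linear_combination b * (key s t hst ht)
      nlinarith [hEsq s t hst ht]
  -- difference vectors
  set F : ℕ → ℤ × ℤ := fun t => (((E (t+1) : ℤ)) - E t, ((jv (t+1) : ℤ)) - jv t) with hF
  set N1 : ℕ → ℤ := fun t => (F t).1 + |(F t).2| with hN1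
  have hsucclt : ∀ t, t ∈ Finset.range (M-1) → t < M ∧ t + 1 < M := by
    intro t ht
    rw [Finset.mem_range] at ht
    omega
  have hF1 : ∀ t ∈ Finset.range (M-1), 1 ≤ (F t).1 := by
    intro t ht
    obtain ⟨h1, h2⟩ := hsucclt t ht
    have := hEmono t (t+1) (Nat.lt_succ_self t) h2
    simp only [hF]
    omega
  have hsum1 : (∑ t ∈ Finset.range (M-1), (F t).1) ≤ (n:ℤ) := by
    simp only [hF]
    rw [Finset.sum_range_sub (f := fun t => ((E t : ℤ)))]
    have h1 : E (M-1) < n := ((hPmem (M-1) (by omega)).1).1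
    omega
  have hsum2 : (∑ t ∈ Finset.range (M-1), |(F t).2|) ≤ (n:ℤ) := by
    rcases hmono with hm | hm
    · have : ∀ t ∈ Finset.range (M-1), |((jv (t+1) : ℤ)) - jv t| = ((jv (t+1) : ℤ)) - jv t := by
        intro t ht
        obtain ⟨h1, h2⟩ := hsucclt t ht
        have := hm t (t+1) (Nat.lt_succ_self t) h2
        rw [abs_of_nonneg]
        omega
      simp only [hF]
      rw [Finset.sum_congr rfl this, Finset.sum_range_sub (f := fun t => ((jv t : ℤ)))]
      have h1 : jv (M-1) < n := ((hPmem (M-1) (by omega)).1).2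
      omega
    · have : ∀ t ∈ Finset.range (M-1), |((jv (t+1) : ℤ)) - jv t| = ((jv t : ℤ)) - jv (t+1) := by
        intro t ht
        obtain ⟨h1, h2⟩ := hsucclt t ht
        have := hm t (t+1) (Nat.lt_succ_self t) h2
        rw [abs_of_nonpos]
        · omega
        · omega
      simp only [hF]
      rw [Finset.sum_congr rfl this, Finset.sum_range_sub' (f := fun t => ((jv t : ℤ)))]
      have h1 : jv 0 < n := ((hPmem 0 (by omega)).1).2
      omega
  have hsumN : (∑ t ∈ Finset.range (M-1), N1 t) ≤ 2*(n:ℤ) := by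
    simp only [hN1]
    rw [Finset.sum_add_distrib]
    linarith
  -- fiber bound
  have hfiber : ∀ v : ℤ × ℤ, ((Finset.range (M-1)).filter (fun t => F t = v)).card ≤ 2 := by
    intro v
    by_contra hcon
    push_neg at hcon
    obtain ⟨t1, t2, t3, ht1, ht2, ht3, h12, h13, h23⟩ := Finset.two_lt_card_iff.mp hcon
    simp only [Finset.mem_filter] at ht1 ht2 ht3
    -- common difference vector
    have lin : ∀ t, t ∈ Finset.range (M-1) → F t = v →
        2*a*((v.1:ℝ))*((E t : ℝ)) + 2*b*((v.2:ℝ))*((jv t : ℝ))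
          = -(a*((v.1:ℝ))^2 + b*((v.2:ℝ))^2) := by
      intro t ht hFt
      obtain ⟨h1, h2⟩ := hsucclt t ht
      have e0 := (hPmem t h1).2
      have e1 := (hPmem (t+1) h2).2
      have hfst : ((E (t+1) : ℤ)) - E t = v.1 := by rw [← hFt]
      have hsnd : ((jv (t+1) : ℤ)) - jv t = v.2 := by rw [← hFt]
      have hfst' : ((E (t+1) : ℝ)) = ((E t : ℝ)) + ((v.1 : ℝ)) := by
        exact_mod_cast congrArg (fun z : ℤ => (z:ℝ)) (by omega : ((E (t+1):ℤ)) = E t + v.1)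
      have hsnd' : ((jv (t+1) : ℝ)) = ((jv t : ℝ)) + ((v.2 : ℝ)) := by
        exact_mod_cast congrArg (fun z : ℤ => (z:ℝ)) (by omega : ((jv (t+1):ℤ)) = jv t + v.2)
      rw [hfst', hsnd'] at e1
      simp only [hjv] at e0 e1 ⊢
      linear_combination e1 - e0
    have hp : (0:ℝ) < (v.1 : ℝ) := by
      have := hF1 t1 ht1.1
      rw [ht1.2] at this
      exact_mod_cast this
    have hEne : ∀ s t : ℕ, s ∈ Finset.range (M-1) → t ∈ Finset.range (M-1) → s ≠ t →
        ((E s : ℝ)) ≠ ((E t : ℝ)) := by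
      intro s t hs ht hst
      rcases Nat.lt_or_ge s t with h | h
      · exact ne_of_lt (by exact_mod_cast hEmono s t h (hsucclt t ht).1)
      · have h' : t < s := by omega
        exact (ne_of_lt (by exact_mod_cast hEmono t s h' (hsucclt s hs).1)).symm
    exact conic_line_three ha hb hc hp
      (by positivity : (0:ℝ) ≤ ((E t1 : ℝ)))
      (hEne t1 t2 ht1.1 ht2.1 h12) (hEne t2 t3 ht2.1 ht3.1 h23) (hEne t1 t3 ht1.1 ht3.1 h13)
      ((hPmem t1 (hsucclt t1 ht1.1).1).2) ((hPmem t2 (hsucclt t2 ht2.1).1).2)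
      ((hPmem t3 (hsucclt t3 ht3.1).1).2)
      (lin t1 ht1.1 ht1.2) (lin t2 ht2.1 ht2.2) (lin t3 ht3.1 ht3.2)
  -- counting small and big
  set Small := (Finset.range (M-1)).filter (fun t => N1 t ≤ (R:ℤ)) with hSmall
  set Big := (Finset.range (M-1)).filter (fun t => ¬ (N1 t ≤ (R:ℤ))) with hBig
  have hVcard : ((Finset.Icc (1:ℤ) R) ×ˢ (Finset.Icc (-(R:ℤ)) R)).card = R * (2*R+1) := by
    rw [Finset.card_product, Int.card_Icc, Int.card_Icc]
    have h1 : ((R:ℤ) + 1 - 1).toNat = R := by omega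
    have h2 : ((R:ℤ) + 1 - -(R:ℤ)).toNat = 2*R+1 := by omega
    rw [h1, h2]
  have hsmallcard : Small.card ≤ 2 * (R * (2*R+1)) := by
    have himg : Small.image F ⊆ (Finset.Icc (1:ℤ) R) ×ˢ (Finset.Icc (-(R:ℤ)) R) := by
      intro v hv
      rw [Finset.mem_image] at hv
      obtain ⟨t, ht, rfl⟩ := hv
      rw [hSmall, Finset.mem_filter] at ht
      have h1 := hF1 t ht.1
      have h2 : (F t).1 + |(F t).2| ≤ (R:ℤ) := by simpa only [hN1] using ht.2
      have h3 := abs_nonneg ((F t).2)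
      rw [Finset.mem_product, Finset.mem_Icc, Finset.mem_Icc]
      constructor
      · constructor
        · exact h1
        · omega
      · have := abs_le.mp (show |(F t).2| ≤ (R:ℤ) by omega)
        exact this
    have h1 : Small.card ≤ 2 * (Small.image F).card := by
      apply Finset.card_le_mul_card_image
      intro v hv
      calc (Small.filter (fun t => F t = v)).card
          ≤ ((Finset.range (M-1)).filter (fun t => F t = v)).card := by
            apply Finset.card_le_card
            apply Finset.filter_subset_filter
            rw [hSmall]
            exact Finset.filter_subset _ _
        _ ≤ 2 := hfiber v
    calc Small.card ≤ 2 * (Small.image F).card := h1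
      _ ≤ 2 * (R * (2*R+1)) := by
          apply Nat.mul_le_mul_left
          rw [← hVcard]
          exact Finset.card_le_card himg
  have hbigcard : Big.card ≤ 2*n/R := by
    have hge : ∀ t ∈ Big, (R:ℤ) + 1 ≤ N1 t := by
      intro t ht
      rw [hBig, Finset.mem_filter] at ht
      omega
    have h1 : (Big.card : ℤ) * ((R:ℤ)+1) ≤ ∑ t ∈ Big, N1 t := by
      have := Finset.card_nsmul_le_sum Big N1 ((R:ℤ)+1) hge
      simpa [nsmul_eq_mul] using this
    have h2 : (∑ t ∈ Big, N1 t) ≤ ∑ t ∈ Finset.range (M-1), N1 t := by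
      apply Finset.sum_le_sum_of_subset_of_nonneg
      · rw [hBig]; exact Finset.filter_subset _ _
      · intro t ht _
        have h1' := hF1 t ht
        have h3 := abs_nonneg ((F t).2)
        simp only [hN1, hF] at h1' h3 ⊢
        omega
    have h4 : (Big.card : ℤ) * (R:ℤ) ≤ 2*(n:ℤ) := by nlinarith [hsumN, Int.ofNat_nonneg Big.card]
    have h5 : Big.card * R ≤ 2*n := by exact_mod_cast h4
    rw [Nat.le_div_iff_mul_le (by omega : 0 < R)]
    exact h5
  have hsplit : Small.card + Big.card = M - 1 := by
    rw [hSmall, hBig]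
    rw [Finset.card_filter_add_card_filter_not]
    exact Finset.card_range _
  have hM1 : M - 1 + 1 = M := Nat.succ_pred_eq_of_pos hM0
  have : M ≤ 2 * (R * (2*R+1)) + 1 + 2*n/R := by omega
  calc M ≤ 2 * (R * (2*R+1)) + 1 + 2*n/R := this
    _ = 2*R*(2*R+1) + 1 + 2*n/R := by ring_nf

end slant

section helpers
variable {α ι : Type*}

lemma map_sum_le (L : Multiset α) {f g : α → ℕ} (h : ∀ l ∈ L, f l ≤ g l) :
    (L.map f).sum ≤ (L.map g).sum := by
  induction L using Multiset.induction_on with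
  | empty => simp
  | cons a s ih =>
    simp only [Multiset.map_cons, Multiset.sum_cons]
    have h1 := h a (Multiset.mem_cons_self a s)
    have h2 := ih (fun l hl => h l (Multiset.mem_cons_of_mem hl))
    omega

lemma map_ite_sum (L : Multiset α) (p : α → Prop) [DecidablePred p] (x y : ℕ) :
    (L.map (fun l => if p l then x else y)).sum
      = L.countP p * x + L.countP (fun l => ¬ p l) * y := by
  induction L using Multiset.induction_on with
  | empty => simp
  | cons a s ih =>
    simp only [Multiset.map_cons, Multiset.sum_cons, Multiset.countP_cons, ih]
    by_cases h : p a <;> simp [h] <;> ring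

lemma countP_and_add (L : Multiset α) (p q : α → Prop) [DecidablePred p] [DecidablePred q] :
    L.countP p + L.countP q ≤ Multiset.card L + L.countP (fun l => p l ∧ q l) := by
  induction L using Multiset.induction_on with
  | empty => simp
  | cons a s ih =>
    simp only [Multiset.countP_cons, Multiset.card_cons]
    by_cases h1 : p a <;> by_cases h2 : q a <;> simp [h1, h2] <;> omega

lemma countP_not_add (L : Multiset α) (p : α → Prop) [DecidablePred p] :
    L.countP p + L.countP (fun l => ¬ p l) = Multiset.card L := by
  induction L using Multiset.induction_on with
  | empty => simp
  | cons a s ih =>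
    simp only [Multiset.countP_cons, Multiset.card_cons]
    by_cases h1 : p a <;> simp [h1] <;> omega

lemma two_count_le_card {x y : α} (h : x ≠ y) (u : Multiset α) :
    u.count x + u.count y ≤ Multiset.card u := by
  have hle : Multiset.replicate (u.count x) x + Multiset.replicate (u.count y) y ≤ u := by
    rw [Multiset.le_iff_count]
    intro a
    rw [Multiset.count_add, Multiset.count_replicate, Multiset.count_replicate]
    by_cases hx : x = a
    · subst hx
      have hy : ¬ y = x := fun hh => h hh.symm
      simp [hy]
    · by_cases hy : y = a <;> simp [hx, hy]
  calc u.count x + u.count y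
      = Multiset.card (Multiset.replicate (u.count x) x + Multiset.replicate (u.count y) y) := by
        simp
    _ ≤ Multiset.card u := Multiset.card_le_card hle
end helpers

lemma incidence_swap {ι : Type*} (P : Finset ι) (pt : ι → ℝ × ℝ) (L : Multiset Line2) :
    ∑ i ∈ P, (L.filter (fun l => l.Mem (pt i))).card
      = (L.map (fun l => (P.filter (fun i => l.Mem (pt i))).card)).sum := by
  induction L using Multiset.induction_on with
  | empty => simp
  | cons a s ih =>
    simp only [Multiset.map_cons, Multiset.sum_cons, Multiset.filter_cons]
    have hstep : ∀ i ∈ P, Multiset.card ((if a.Mem (pt i) then {a} else 0)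
          + Multiset.filter (fun l => l.Mem (pt i)) s)
        = (if a.Mem (pt i) then 1 else 0)
          + Multiset.card (Multiset.filter (fun l => l.Mem (pt i)) s) := by
      intro i _
      by_cases h : a.Mem (pt i) <;> simp [h, Nat.add_comm]
    rw [Finset.sum_congr rfl hstep, Finset.sum_add_distrib, ih,
      (Finset.card_filter _ _).symm]

lemma natsq_inj' {i j : ℕ} (h : ((i:ℝ))^2 = ((j:ℝ))^2) : i = j := by
  have h' : ((i^2 : ℕ) : ℝ) = ((j^2 : ℕ) : ℝ) := by push_cast; exact h
  exact Nat.pow_left_injective two_ne_zero (Nat.cast_inj.mp h')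

lemma xaxis_bound (n : ℕ) (l : Line2) (hc : l.c ≠ 0) :
    ((Finset.Icc 1 (n-1)).filter (fun i : ℕ => l.Mem (((i:ℝ))^2, 0))).card
      ≤ if l.a ≠ 0 then 1 else 0 := by
  by_cases ha : l.a = 0
  · simp only [ha, ne_eq, not_true_eq_false, if_neg, if_false, Nat.le_zero,
      Finset.card_eq_zero]
    apply Finset.filter_false_of_mem
    intro i _ hmem
    unfold Line2.Mem at hmem
    simp [ha] at hmem
    exact hc hmem.symm
  · simp only [ne_eq, ha, not_false_eq_true, if_true]
    apply Finset.card_le_one.mpr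
    intro i hi j hj
    rw [Finset.mem_filter] at hi hj
    have h1 := hi.2; have h2 := hj.2
    unfold Line2.Mem at h1 h2
    simp only at h1 h2
    apply natsq_inj'
    have : l.a * ((i:ℝ)^2 - (j:ℝ)^2) = 0 := by push_cast at h1 h2 ⊢; linarith
    have := (mul_eq_zero.mp this).resolve_left ha
    linarith

lemma yaxis_bound (n : ℕ) (l : Line2) (hc : l.c ≠ 0) :
    ((Finset.Icc 1 (n-1)).filter (fun i : ℕ => l.Mem (0, ((i:ℝ))^2))).card
      ≤ if l.b ≠ 0 then 1 else 0 := by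
  by_cases hb : l.b = 0
  · simp only [hb, ne_eq, not_true_eq_false, if_neg, if_false, Nat.le_zero,
      Finset.card_eq_zero]
    apply Finset.filter_false_of_mem
    intro i _ hmem
    unfold Line2.Mem at hmem
    simp [hb] at hmem
    exact hc hmem.symm
  · simp only [ne_eq, hb, not_false_eq_true, if_true]
    apply Finset.card_le_one.mpr
    intro i hi j hj
    rw [Finset.mem_filter] at hi hj
    have h1 := hi.2; have h2 := hj.2
    unfold Line2.Mem at h1 h2
    simp only at h1 h2
    apply natsq_inj'
    have : l.b * ((i:ℝ)^2 - (j:ℝ)^2) = 0 := by push_cast at h1 h2 ⊢; linarith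
    have := (mul_eq_zero.mp this).resolve_left hb
    linarith


lemma interior_bound (n R : ℕ) (hR : 1 ≤ R) (l : Line2) (hc : l.c ≠ 0) :
    ((Finset.Icc 1 (n-1) ×ˢ Finset.Icc 1 (n-1)).filter
      (fun q : ℕ×ℕ => l.Mem (((q.1:ℝ))^2, ((q.2:ℝ))^2))).card
      ≤ if l.a ≠ 0 ∧ l.b ≠ 0 then 2*R*(2*R+1)+1+2*n/R else n-1 := by
  by_cases hs : l.a ≠ 0 ∧ l.b ≠ 0
  · rw [if_pos hs]
    refine le_trans (Finset.card_le_card ?_) (slant_count n R hR hs.1 hs.2 hc)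
    intro q hq
    rw [Finset.mem_filter] at hq ⊢
    obtain ⟨hq1, hq2⟩ := hq
    rw [Finset.mem_product, Finset.mem_Icc, Finset.mem_Icc] at hq1
    refine ⟨?_, hq2⟩
    rw [Finset.mem_product, Finset.mem_range, Finset.mem_range]
    omega
  · rw [if_neg hs]
    have hcard : (Finset.Icc 1 (n-1)).card = n - 1 := by
      rw [Nat.card_Icc]
      omega
    by_cases ha : l.a = 0
    · have hb : l.b ≠ 0 := l.nondeg.resolve_left (by simpa using ha)
      refine le_trans (Finset.card_le_card_of_injOn Prod.fst ?_ ?_) (le_of_eq hcard)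
      · intro q hq
        rw [Finset.mem_coe, Finset.mem_filter, Finset.mem_product] at hq
        exact hq.1.1
      · intro q hq q' hq' h1
        rw [Finset.mem_coe, Finset.mem_filter] at hq hq'
        have e1 := hq.2; have e2 := hq'.2
        unfold Line2.Mem at e1 e2
        simp only [ha, zero_mul, zero_add] at e1 e2
        have : l.b * ((q.2:ℝ)^2 - (q'.2:ℝ)^2) = 0 := by linarith
        have h2 := natsq_inj' (by linarith [(mul_eq_zero.mp this).resolve_left hb] :
          ((q.2:ℝ))^2 = ((q'.2:ℝ))^2)
        exact Prod.ext h1 h2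
    · have ha' : l.a ≠ 0 := ha
      have hb : l.b = 0 := by tauto
      refine le_trans (Finset.card_le_card_of_injOn Prod.snd ?_ ?_) (le_of_eq hcard)
      · intro q hq
        rw [Finset.mem_coe, Finset.mem_filter, Finset.mem_product] at hq
        exact hq.1.2
      · intro q hq q' hq' h2
        rw [Finset.mem_coe, Finset.mem_filter] at hq hq'
        have e1 := hq.2; have e2 := hq'.2
        unfold Line2.Mem at e1 e2
        simp only [hb, zero_mul, add_zero] at e1 e2
        have : l.a * ((q.1:ℝ)^2 - (q'.1:ℝ)^2) = 0 := by linarith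
        have h1 := natsq_inj' (by linarith [(mul_eq_zero.mp this).resolve_left ha'] :
          ((q.1:ℝ))^2 = ((q'.1:ℝ))^2)
        exact Prod.ext h1 h2

lemma mem_grid {n : ℕ} {i j : ℕ} (hi : i < n) (hj : j < n) :
    ((((i:ℕ):ℝ))^2, (((j:ℕ):ℝ))^2) ∈ (↑(quadSet n ×ˢ quadSet n) : Set (ℝ × ℝ)) := by
  rw [Finset.mem_coe, Finset.mem_product]
  constructor
  · rw [quadSet_mem_iff]
    exact ⟨i, hi, rfl⟩
  · rw [quadSet_mem_iff]
    exact ⟨j, hj, rfl⟩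

lemma lines_c_ne_zero {Γ : Set (ℝ × ℝ)} {k : ℕ} {L : Multiset Line2}
    (hL : IsKCover Γ k L) : ∀ l ∈ L, l.c ≠ 0 := by
  intro l hl hcl
  apply hL.1 l hl
  unfold Line2.Mem
  simp [hcl]

lemma card_finset_sum {α β : Type*} (s : Finset β) (f : β → Multiset α) :
    Multiset.card (∑ i ∈ s, f i) = ∑ i ∈ s, Multiset.card (f i) := by
  induction s using Finset.induction_on with
  | empty => simp
  | insert _ _ h ih => rw [Finset.sum_insert h, Finset.sum_insert h, Multiset.card_add, ih]

section cover
variable {n k : ℕ} {L : Multiset Line2}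

lemma cover_x (hn : 2 ≤ n) (hL : IsKCover (↑(quadSet n ×ˢ quadSet n)) k L) :
    k * (n-1) ≤ L.countP (fun l => l.a ≠ 0) := by
  have hc := lines_c_ne_zero hL
  have h1 : k * (n-1) ≤ ∑ i ∈ Finset.Icc 1 (n-1),
      (L.filter (fun l => l.Mem (((i:ℝ))^2, 0))).card := by
    calc k * (n-1) = ∑ _i ∈ Finset.Icc 1 (n-1), k := by
          rw [Finset.sum_const, smul_eq_mul, Nat.card_Icc]
          have h9 : n-1+1-1 = n-1 := by omega
          rw [h9, Nat.mul_comm]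
      _ ≤ _ := by
          apply Finset.sum_le_sum
          intro i hi
          rw [Finset.mem_Icc] at hi
          have hmem := mem_grid (n := n) (i := i) (j := 0) (by omega) (by omega)
          have h0 : (((0:ℕ):ℝ))^2 = (0:ℝ) := by norm_num
          rw [h0] at hmem
          apply hL.2 _ hmem
          intro hp
          rw [Prod.mk.injEq] at hp
          have : ((i:ℝ))^2 ≠ 0 := by
            have : (1:ℝ) ≤ (i:ℝ) := by exact_mod_cast hi.1
            positivity
          exact this hp.1
  rw [incidence_swap] at h1
  have h2 := map_sum_le L (g := fun l => if l.a ≠ 0 then 1 else 0)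
    (fun l hl => xaxis_bound n l (hc l hl))
  rw [map_ite_sum] at h2
  omega

lemma cover_y (hn : 2 ≤ n) (hL : IsKCover (↑(quadSet n ×ˢ quadSet n)) k L) :
    k * (n-1) ≤ L.countP (fun l => l.b ≠ 0) := by
  have hc := lines_c_ne_zero hL
  have h1 : k * (n-1) ≤ ∑ i ∈ Finset.Icc 1 (n-1),
      (L.filter (fun l => l.Mem (0, ((i:ℝ))^2))).card := by
    calc k * (n-1) = ∑ _i ∈ Finset.Icc 1 (n-1), k := by
          rw [Finset.sum_const, smul_eq_mul, Nat.card_Icc]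
          have h9 : n-1+1-1 = n-1 := by omega
          rw [h9, Nat.mul_comm]
      _ ≤ _ := by
          apply Finset.sum_le_sum
          intro i hi
          rw [Finset.mem_Icc] at hi
          have hmem := mem_grid (n := n) (i := 0) (j := i) (by omega) (by omega)
          have h0 : (((0:ℕ):ℝ))^2 = (0:ℝ) := by norm_num
          rw [h0] at hmem
          apply hL.2 _ hmem
          intro hp
          rw [Prod.mk.injEq] at hp
          have : ((i:ℝ))^2 ≠ 0 := by
            have : (1:ℝ) ≤ (i:ℝ) := by exact_mod_cast hi.1
            positivity
          exact this hp.2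
  rw [incidence_swap] at h1
  have h2 := map_sum_le L (g := fun l => if l.b ≠ 0 then 1 else 0)
    (fun l hl => yaxis_bound n l (hc l hl))
  rw [map_ite_sum] at h2
  omega

lemma cover_int (R : ℕ) (hn : 2 ≤ n) (hR : 1 ≤ R)
    (hL : IsKCover (↑(quadSet n ×ˢ quadSet n)) k L) :
    k * ((n-1)*(n-1)) ≤ L.countP (fun l => l.a ≠ 0 ∧ l.b ≠ 0) * (2*R*(2*R+1)+1+2*n/R)
      + L.countP (fun l => ¬(l.a ≠ 0 ∧ l.b ≠ 0)) * (n-1) := by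
  have hc := lines_c_ne_zero hL
  have h1 : k * ((n-1)*(n-1)) ≤ ∑ q ∈ Finset.Icc 1 (n-1) ×ˢ Finset.Icc 1 (n-1),
      (L.filter (fun l => l.Mem (((q.1:ℝ))^2, ((q.2:ℝ))^2))).card := by
    calc k * ((n-1)*(n-1)) = ∑ _q ∈ Finset.Icc 1 (n-1) ×ˢ Finset.Icc 1 (n-1), k := by
          rw [Finset.sum_const, smul_eq_mul, Finset.card_product, Nat.card_Icc]
          have h9 : n-1+1-1 = n-1 := by omega
          rw [h9]
          ring
      _ ≤ _ := by
          apply Finset.sum_le_sum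
          intro q hq
          rw [Finset.mem_product, Finset.mem_Icc, Finset.mem_Icc] at hq
          have hmem := mem_grid (n := n) (i := q.1) (j := q.2) (by omega) (by omega)
          apply hL.2 _ hmem
          intro hp
          rw [Prod.mk.injEq] at hp
          have : ((q.1:ℝ))^2 ≠ 0 := by
            have : (1:ℝ) ≤ (q.1:ℝ) := by exact_mod_cast hq.1.1
            positivity
          exact this hp.1
  rw [incidence_swap] at h1
  have h2 := map_sum_le L
    (g := fun l => if l.a ≠ 0 ∧ l.b ≠ 0 then 2*R*(2*R+1)+1+2*n/R else n-1)
    (fun l hl => interior_bound n R hR l (hc l hl))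
  rw [map_ite_sum] at h2
  omega
end cover


noncomputable def vl (i : ℕ) : Line2 := ⟨1, 0, ((i:ℝ))^2, Or.inl one_ne_zero⟩
noncomputable def hlin (i : ℕ) : Line2 := ⟨0, 1, ((i:ℝ))^2, Or.inr one_ne_zero⟩
noncomputable def dl (i : ℕ) : Line2 := ⟨1, 1, ((i:ℝ))^2, Or.inl one_ne_zero⟩

lemma cover_exists (n k : ℕ) (hn : 2 ≤ n) :
    ∃ L : Multiset Line2, IsKCover (↑(quadSet n ×ˢ quadSet n)) k L ∧
      Multiset.card L = (n-1) * (3 * ((k+1)/2)) := by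
  set k2 := (k+1)/2 with hk2
  set L : Multiset Line2 := ∑ i ∈ Finset.Icc 1 (n-1),
    (Multiset.replicate k2 (vl i) + Multiset.replicate k2 (hlin i)
      + Multiset.replicate k2 (dl i)) with hLdef
  have castne : ∀ i : ℕ, 1 ≤ i → ((i:ℝ))^2 ≠ 0 := by
    intro i hi
    have h1 : (1:ℝ) ≤ (i:ℝ) := by exact_mod_cast hi
    positivity
  have hblk : ∀ (x : Line2) (i : ℕ),
      Multiset.count x (Multiset.replicate k2 (vl i) + Multiset.replicate k2 (hlin i)
        + Multiset.replicate k2 (dl i))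
      = (if vl i = x then k2 else 0) + (if hlin i = x then k2 else 0)
        + (if dl i = x then k2 else 0) := by
    intro x i
    rw [Multiset.count_add, Multiset.count_add, Multiset.count_replicate,
      Multiset.count_replicate, Multiset.count_replicate]
  have hcnt : ∀ (x : Line2) (i : ℕ), i ∈ Finset.Icc 1 (n-1) →
      (x = vl i ∨ x = hlin i ∨ x = dl i) → k2 ≤ L.count x := by
    intro x i hi hx
    rw [hLdef, Multiset.count_sum']
    have hterm : k2 ≤ Multiset.count x (Multiset.replicate k2 (vl i)
        + Multiset.replicate k2 (hlin i) + Multiset.replicate k2 (dl i)) := by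
      rw [hblk]
      rcases hx with h | h | h <;> rw [h] <;> simp [vl, hlin, dl, Line2.mk.injEq]
    exact le_trans hterm (Finset.single_le_sum
      (f := fun j => Multiset.count x (Multiset.replicate k2 (vl j)
        + Multiset.replicate k2 (hlin j) + Multiset.replicate k2 (dl j)))
      (fun j _ => Nat.zero_le _) hi)
  have hmemL : ∀ l ∈ L, ∃ i : ℕ, 1 ≤ i ∧ i ≤ n-1 ∧ (l = vl i ∨ l = hlin i ∨ l = dl i) := by
    intro l hl
    rw [hLdef, Multiset.mem_sum] at hl
    obtain ⟨i, hi, hli⟩ := hl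
    rw [Finset.mem_Icc] at hi
    refine ⟨i, hi.1, hi.2, ?_⟩
    rw [Multiset.mem_add, Multiset.mem_add] at hli
    rcases hli with (h | h) | h <;>
      [exact Or.inl (Multiset.eq_of_mem_replicate h);
       exact Or.inr (Or.inl (Multiset.eq_of_mem_replicate h));
       exact Or.inr (Or.inr (Multiset.eq_of_mem_replicate h))]
  refine ⟨L, ⟨?_, ?_⟩, ?_⟩
  · -- no line through origin
    intro l hl hm
    obtain ⟨i, hi1, _, hcase⟩ := hmemL l hl
    unfold Line2.Mem at hm
    have hc : l.c = ((i:ℝ))^2 := by rcases hcase with h | h | h <;> rw [h] <;> rfl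
    rw [hc] at hm
    simp at hm
    exact castne i hi1 hm.symm
  · -- coverage
    intro p hp hp0
    rw [Finset.mem_coe, Finset.mem_product] at hp
    obtain ⟨i, hi, hp1⟩ := (quadSet_mem_iff n p.1).mp hp.1
    obtain ⟨j, hj, hp2⟩ := (quadSet_mem_iff n p.2).mp hp.2
    -- find two distinct lines through p with count ≥ k2
    have main : ∃ x y : Line2, x ≠ y ∧ x.Mem p ∧ y.Mem p ∧
        k2 ≤ L.count x ∧ k2 ≤ L.count y := by
      rcases Nat.eq_zero_or_pos i with hi0 | hi0
      · rcases Nat.eq_zero_or_pos j with hj0 | hj0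
        · exfalso
          apply hp0
          subst hi0; subst hj0
          simp at hp1 hp2
          exact Prod.ext hp1 hp2
        · -- i = 0, j ≥ 1 : use hlin j and dl j
          refine ⟨hlin j, dl j, ?_, ?_, ?_, ?_, ?_⟩
          · intro h
            have := congrArg Line2.a h
            simp [hlin, dl] at this
          · unfold Line2.Mem
            subst hi0
            simp at hp1
            rw [hp1, hp2]
            simp [hlin]
          · unfold Line2.Mem
            subst hi0
            simp at hp1
            rw [hp1, hp2]
            simp [dl]
          · exact hcnt _ j (Finset.mem_Icc.mpr ⟨hj0, by omega⟩) (Or.inr (Or.inl rfl))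
          · exact hcnt _ j (Finset.mem_Icc.mpr ⟨hj0, by omega⟩) (Or.inr (Or.inr rfl))
      · rcases Nat.eq_zero_or_pos j with hj0 | hj0
        · -- j = 0, i ≥ 1 : use vl i and dl i
          refine ⟨vl i, dl i, ?_, ?_, ?_, ?_, ?_⟩
          · intro h
            have := congrArg Line2.b h
            simp [vl, dl] at this
          · unfold Line2.Mem
            rw [hp1]
            simp [vl]
          · unfold Line2.Mem
            subst hj0
            simp at hp2
            rw [hp1, hp2]
            simp [dl]
          · exact hcnt _ i (Finset.mem_Icc.mpr ⟨hi0, by omega⟩) (Or.inl rfl)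
          · exact hcnt _ i (Finset.mem_Icc.mpr ⟨hi0, by omega⟩) (Or.inr (Or.inr rfl))
        · -- i,j ≥ 1 : vl i and hlin j
          refine ⟨vl i, hlin j, ?_, ?_, ?_, ?_, ?_⟩
          · intro h
            have := congrArg Line2.a h
            simp [vl, hlin] at this
          · unfold Line2.Mem
            rw [hp1]
            simp [vl]
          · unfold Line2.Mem
            rw [hp2]
            simp [hlin]
          · exact hcnt _ i (Finset.mem_Icc.mpr ⟨hi0, by omega⟩) (Or.inl rfl)
          · exact hcnt _ j (Finset.mem_Icc.mpr ⟨hj0, by omega⟩) (Or.inr (Or.inl rfl))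
    obtain ⟨x, y, hxy, hmx, hmy, hcx, hcy⟩ := main
    have hfx : Multiset.count x (L.filter (fun l => l.Mem p)) = Multiset.count x L := by
      rw [Multiset.count_filter, if_pos hmx]
    have hfy : Multiset.count y (L.filter (fun l => l.Mem p)) = Multiset.count y L := by
      rw [Multiset.count_filter, if_pos hmy]
    have := two_count_le_card hxy (L.filter (fun l => l.Mem p))
    rw [hfx, hfy] at this
    omega
  · -- cardinality
    rw [hLdef, card_finset_sum]
    have : ∀ i ∈ Finset.Icc 1 (n-1), Multiset.card (Multiset.replicate k2 (vl i)
        + Multiset.replicate k2 (hlin i) + Multiset.replicate k2 (dl i)) = 3 * k2 := by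
      intro i _
      rw [Multiset.card_add, Multiset.card_add, Multiset.card_replicate,
        Multiset.card_replicate, Multiset.card_replicate]
      ring
    rw [Finset.sum_congr rfl this, Finset.sum_const, smul_eq_mul, Nat.card_Icc]
    have h9 : n-1+1-1 = n-1 := by omega
    rw [h9]

set_option maxHeartbeats 2000000 in
theorem stmt13 :
    ∀ ε : ℝ, 0 < ε → ∃ N : ℕ, ∀ n : ℕ, N ≤ n → ∀ k : ℕ, N ≤ k →
      (3 / 2 - ε) * ((k : ℝ) * ((n : ℝ) - 1)) ≤ (cov (↑(quadSet n ×ˢ quadSet n)) k : ℝ) ∧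
      (cov (↑(quadSet n ×ˢ quadSet n)) k : ℝ) ≤ (3 / 2 + ε) * ((k : ℝ) * ((n : ℝ) - 1)) := by
  intro ε hε
  set δ : ℝ := min ε 1 with hδdef
  have hδpos : 0 < δ := lt_min hε one_pos
  have hδ1 : δ ≤ 1 := min_le_right _ _
  have hδε : δ ≤ ε := min_le_left _ _
  set R : ℕ := ⌈(4:ℝ)/δ⌉₊ + 1 with hRdef
  have hR1 : 1 ≤ R := by omega
  have hRr : (4:ℝ)/δ ≤ (R:ℝ) := by
    refine le_trans (Nat.le_ceil _) ?_
    exact_mod_cast Nat.le_succ _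
  have hRpos : (0:ℝ) < (R:ℝ) := lt_of_lt_of_le (by positivity) hRr
  clear_value δ R
  refine ⟨max (max 2 (⌈(2*(((2*R*(2*R+1)+1 : ℕ):ℝ)+1))/δ⌉₊ + 2)) (⌈(3:ℝ)/(2*ε)⌉₊ + 1),
    fun n hn k hk => ?_⟩
  have hn2 : 2 ≤ n := le_trans (le_trans (le_max_left _ _) (le_max_left _ _)) hn
  have hnc : (2*(((2*R*(2*R+1)+1 : ℕ):ℝ)+1))/δ ≤ (n:ℝ) := by
    have h1 : ⌈(2*(((2*R*(2*R+1)+1 : ℕ):ℝ)+1))/δ⌉₊ + 2 ≤ n :=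
      le_trans (le_trans (le_max_right _ _) (le_max_left _ _)) hn
    refine le_trans (Nat.le_ceil _) ?_
    exact_mod_cast le_trans (Nat.le_add_right _ 2) h1
  have hkc : (3:ℝ)/(2*ε) ≤ (k:ℝ) := by
    have h1 : ⌈(3:ℝ)/(2*ε)⌉₊ + 1 ≤ k := le_trans (le_max_right _ _) hk
    refine le_trans (Nat.le_ceil _) ?_
    exact_mod_cast le_trans (Nat.le_add_right _ 1) h1
  have hn1 : ((n-1 : ℕ):ℝ) = (n:ℝ) - 1 := by
    rw [Nat.cast_sub (by omega)]
    norm_num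
  have hnr1 : (0:ℝ) < (n:ℝ) - 1 := by
    have h2 : (2:ℝ) ≤ (n:ℝ) := by exact_mod_cast hn2
    linarith
  have hK0 : (0:ℝ) ≤ (k:ℝ)*((n:ℝ)-1) := mul_nonneg (Nat.cast_nonneg k) (le_of_lt hnr1)
  obtain ⟨L0, hL0, hc0⟩ := cover_exists n k hn2
  have hne : {m | ∃ L : Multiset Line2,
      IsKCover (↑(quadSet n ×ˢ quadSet n)) k L ∧ Multiset.card L = m}.Nonempty :=
    ⟨_, L0, hL0, hc0⟩
  constructor
  · -- LOWER BOUND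
    obtain ⟨L, hL, hcard⟩ := Nat.sInf_mem hne
    rw [cov, ← hcard]
    have f1 := cover_x hn2 hL
    have f2 := cover_y hn2 hL
    have f3 := cover_int R hn2 hR1 hL
    have fab := countP_and_add L (fun l => l.a ≠ 0) (fun l => l.b ≠ 0)
    have fvd := countP_not_add L (fun l => l.a ≠ 0 ∧ l.b ≠ 0)
    obtain ⟨T, hT⟩ : ∃ t : ℝ, t = ((Multiset.card L : ℕ):ℝ) := ⟨_, rfl⟩
    obtain ⟨D, hD⟩ : ∃ t : ℝ, t = ((L.countP (fun l => l.a ≠ 0 ∧ l.b ≠ 0) : ℕ):ℝ) := ⟨_, rfl⟩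
    obtain ⟨V, hV⟩ : ∃ t : ℝ, t = ((L.countP (fun l => ¬(l.a ≠ 0 ∧ l.b ≠ 0)) : ℕ):ℝ) := ⟨_, rfl⟩
    rw [← hT]
    have hD0 : 0 ≤ D := by rw [hD]; exact Nat.cast_nonneg _
    have r1 : (k:ℝ)*((n:ℝ)-1) ≤ ((L.countP (fun l => l.a ≠ 0) : ℕ) : ℝ) := by
      rw [← hn1]
      exact_mod_cast f1
    have r2 : (k:ℝ)*((n:ℝ)-1) ≤ ((L.countP (fun l => l.b ≠ 0) : ℕ) : ℝ) := by
      rw [← hn1]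
      exact_mod_cast f2
    have rab : ((L.countP (fun l => l.a ≠ 0) : ℕ) : ℝ)
        + ((L.countP (fun l => l.b ≠ 0) : ℕ) : ℝ) ≤ T + D := by
      rw [hT, hD]
      exact_mod_cast fab
    have rvd : D + V = T := by
      rw [hT, hD, hV]
      exact_mod_cast fvd
    have f3r : (k:ℝ)*(((n:ℝ)-1)*((n:ℝ)-1))
        ≤ D*(((2*R*(2*R+1)+1 : ℕ):ℝ) + ((2*n/R : ℕ):ℝ)) + V*((n:ℝ)-1) := by
      rw [← hn1, hD, hV]
      exact_mod_cast f3
    have hdivr : ((2*n/R : ℕ):ℝ) ≤ 2*(n:ℝ)/(R:ℝ) := by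
      refine le_trans (Nat.cast_div_le) ?_
      rw [Nat.cast_mul]
      norm_num
    have hδR : (4:ℝ) ≤ δ*(R:ℝ) := by
      rw [div_le_iff₀ hδpos] at hRr
      linarith
    have hδn : 2*(((2*R*(2*R+1)+1 : ℕ):ℝ)+1) ≤ δ*(n:ℝ) := by
      rw [div_le_iff₀ hδpos] at hnc
      linarith
    have hm0 : ((2*R*(2*R+1)+1 : ℕ):ℝ) + ((2*n/R : ℕ):ℝ) ≤ δ*((n:ℝ)-1) := by
      have h2nR : 2*(n:ℝ)/(R:ℝ) ≤ δ*(n:ℝ)/2 := by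
        rw [div_le_div_iff₀ hRpos (by norm_num : (0:ℝ) < 2)]
        have hn0 : (0:ℝ) ≤ (n:ℝ) := Nat.cast_nonneg n
        nlinarith
      have := le_trans hdivr h2nR
      linarith
    have e0 : (k:ℝ)*((n:ℝ)-1) ≤ D*δ + (T - D) := by
      have hDm : D*(((2*R*(2*R+1)+1 : ℕ):ℝ) + ((2*n/R : ℕ):ℝ)) ≤ D*(δ*((n:ℝ)-1)) :=
        mul_le_mul_of_nonneg_left hm0 hD0
      have hVT : V = T - D := by linarith
      rw [hVT] at f3r
      have e0' : ((k:ℝ)*((n:ℝ)-1)) * ((n:ℝ)-1) ≤ (D*δ + (T - D)) * ((n:ℝ)-1) := by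
        nlinarith [f3r, hDm]
      exact le_of_mul_le_mul_right e0' hnr1
    have e1 : 2*((k:ℝ)*((n:ℝ)-1)) ≤ T + D := by linarith
    have e2 : (3-2*δ)*((k:ℝ)*((n:ℝ)-1)) ≤ (2-δ)*T := by
      have hprod : 0 ≤ (1-δ)*(D - (2*((k:ℝ)*((n:ℝ)-1)) - T)) :=
        mul_nonneg (by linarith) (by linarith)
      nlinarith [e0, hprod]
    have hcoef : (2-δ)*(3/2-ε) ≤ 3-2*δ := by nlinarith
    have hfin : (2-δ)*((3/2-ε)*((k:ℝ)*((n:ℝ)-1))) ≤ (2-δ)*T := by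
      calc (2-δ)*((3/2-ε)*((k:ℝ)*((n:ℝ)-1)))
          = ((2-δ)*(3/2-ε))*((k:ℝ)*((n:ℝ)-1)) := by ring
        _ ≤ (3-2*δ)*((k:ℝ)*((n:ℝ)-1)) := mul_le_mul_of_nonneg_right hcoef hK0
        _ ≤ (2-δ)*T := e2
    exact le_of_mul_le_mul_left hfin (by linarith)
  · -- UPPER BOUND
    have hub : cov (↑(quadSet n ×ˢ quadSet n)) k ≤ (n-1)*(3*((k+1)/2)) :=
      Nat.sInf_le ⟨L0, hL0, hc0⟩
    have hk2r : (((k+1)/2 : ℕ):ℝ) ≤ ((k:ℝ)+1)/2 := by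
      rw [le_div_iff₀ (by norm_num : (0:ℝ) < 2)]
      have h1 : ((k+1)/2) * 2 ≤ k+1 := by omega
      exact_mod_cast h1
    have hcovr : ((cov (↑(quadSet n ×ˢ quadSet n)) k : ℕ):ℝ)
        ≤ ((n:ℝ)-1)*(3*(((k+1)/2 : ℕ):ℝ)) := by
      rw [← hn1]
      exact_mod_cast hub
    have hεk : (3:ℝ)/2 ≤ ε*(k:ℝ) := by
      rw [div_le_iff₀ (by positivity : (0:ℝ) < 2*ε)] at hkc
      linarith
    have hstep : ((n:ℝ)-1)*(3*(((k+1)/2 : ℕ):ℝ)) ≤ ((n:ℝ)-1)*(3*(((k:ℝ)+1)/2)) := by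
      apply mul_le_mul_of_nonneg_left _ (le_of_lt hnr1)
      linarith
    have hlast : ((n:ℝ)-1)*(3*(((k:ℝ)+1)/2)) ≤ (3/2+ε)*((k:ℝ)*((n:ℝ)-1)) := by
      nlinarith [hεk, hnr1]
    linarith
end

section
/- For n ≥ 2, let E_n = {0} ∪ {2^i : 0 ≤ i ≤ n−2} ⊆ ℝ and let Γ_exp,n = E_n × E_n ⊆ ℝ². Then Γ_exp,n is 1-generic: every affine line in ℝ² that contains two boundary points of Γ_exp,n contains at most one interior point of Γ_exp,n. -/
open scoped Classical

/-- A boundary point of the grid: one of its coordinates is `0`. -/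
def IsBoundary (Γ : Set (ℝ × ℝ)) (p : ℝ × ℝ) : Prop :=
  p ∈ Γ ∧ (p.1 = 0 ∨ p.2 = 0)

/-- An interior point of the grid: none of its coordinates is `0`. -/
def IsInterior (Γ : Set (ℝ × ℝ)) (p : ℝ × ℝ) : Prop :=
  p ∈ Γ ∧ p.1 ≠ 0 ∧ p.2 ≠ 0

/-- The set `{0} ∪ {2^i : 0 ≤ i ≤ n-2} ⊆ ℝ`. -/
noncomputable def expSet (n : ℕ) : Finset ℝ :=
  insert 0 ((Finset.range (n - 1)).image (fun i => (2 : ℝ) ^ i))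

section Aux


lemma pow2_real_inj {i s : ℕ} (h : (2:ℝ)^i = 2^s) : i = s := by
  rcases lt_trichotomy i s with h'|h'|h'
  · exact absurd h (ne_of_lt (pow_lt_pow_right₀ (by norm_num) h'))
  · exact h'
  · exact absurd h.symm (ne_of_lt (pow_lt_pow_right₀ (by norm_num) h'))

lemma key_sum {i j s t : ℕ} (h : (2:ℝ)^i/2^s + 2^j/2^t = 1) :
    i + 1 = s ∧ j + 1 = t := by
  have pi : (0:ℝ) < 2^i := by positivity
  have pj : (0:ℝ) < 2^j := by positivity
  have ps : (0:ℝ) < 2^s := by positivity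
  have pt : (0:ℝ) < 2^t := by positivity
  have hlt1 : (2:ℝ)^i/2^s < 1 := by
    have : (0:ℝ) < 2^j/2^t := by positivity
    linarith
  have hlt2 : (2:ℝ)^j/2^t < 1 := by
    have : (0:ℝ) < 2^i/2^s := by positivity
    linarith
  have hi : i < s := by
    have := (div_lt_one ps).1 hlt1
    exact (pow_lt_pow_iff_right₀ (by norm_num : (1:ℝ) < 2)).1 this
  have hj : j < t := by
    have := (div_lt_one pt).1 hlt2
    exact (pow_lt_pow_iff_right₀ (by norm_num : (1:ℝ) < 2)).1 this
  have hle1 : (2:ℝ)^(i+1) ≤ 2^s := pow_le_pow_right₀ (by norm_num) hi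
  have hle2 : (2:ℝ)^(j+1) ≤ 2^t := pow_le_pow_right₀ (by norm_num) hj
  rw [pow_succ] at hle1 hle2
  have h1 : (2:ℝ)^i/2^s ≤ 1/2 := by
    rw [div_le_div_iff₀ ps (by norm_num)]; linarith
  have h2 : (2:ℝ)^j/2^t ≤ 1/2 := by
    rw [div_le_div_iff₀ pt (by norm_num)]; linarith
  have e1 : (2:ℝ)^i/2^s = 1/2 := by linarith
  have e2 : (2:ℝ)^j/2^t = 1/2 := by linarith
  constructor
  · apply pow2_real_inj
    rw [pow_succ]
    field_simp at e1
    linarith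
  · apply pow2_real_inj
    rw [pow_succ]
    field_simp at e2
    linarith

lemma mem_expSet' {n : ℕ} {x : ℝ} (hx : x ∈ expSet n) :
    x = 0 ∨ ∃ i, x = (2:ℝ)^i := by
  simp only [expSet, Finset.mem_insert, Finset.mem_image, Finset.mem_range] at hx
  rcases hx with h | ⟨i, _, rfl⟩
  · exact Or.inl h
  · exact Or.inr ⟨i, rfl⟩

end Aux

theorem stmt14 (n : ℕ) (hn : 2 ≤ n) :
    ∀ l : Line2,
      (∃ p q : ℝ × ℝ, p ≠ q ∧ IsBoundary (↑(expSet n ×ˢ expSet n)) p ∧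
        IsBoundary (↑(expSet n ×ˢ expSet n)) q ∧ l.Mem p ∧ l.Mem q) →
      Set.ncard {r : ℝ × ℝ | IsInterior (↑(expSet n ×ˢ expSet n)) r ∧ l.Mem r} ≤ 1 := by
  rintro l ⟨p, q, hpq, ⟨hpΓ, hpb⟩, ⟨hqΓ, hqb⟩, hlp, hlq⟩
  set S := {r : ℝ × ℝ | IsInterior (↑(expSet n ×ˢ expSet n)) r ∧ l.Mem r} with hS
  -- reduce to subsingleton
  suffices hsub : S.Subsingleton by
    rcases S.eq_empty_or_nonempty with h'|⟨x,hx⟩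
    · simp [h']
    · have : S = {x} := hsub.eq_singleton_of_mem hx
      simp [this]
  -- extract grid membership of p, q
  simp only [Finset.coe_product, Set.mem_prod, Finset.mem_coe] at hpΓ hqΓ
  obtain ⟨hp1, hp2⟩ := hpΓ
  obtain ⟨hq1, hq2⟩ := hqΓ
  -- membership facts for interior points
  have interior_pow : ∀ r ∈ S, ∃ i j : ℕ, r = ((2:ℝ)^i, (2:ℝ)^j) := by
    rintro r ⟨⟨hrΓ, hr1, hr2⟩, -⟩
    simp only [Finset.coe_product, Set.mem_prod, Finset.mem_coe] at hrΓ
    rcases mem_expSet' hrΓ.1 with h | ⟨i, hi⟩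
    · exact absurd h hr1
    rcases mem_expSet' hrΓ.2 with h | ⟨j, hj⟩
    · exact absurd h hr2
    exact ⟨i, j, Prod.ext hi hj⟩
  by_cases hb : l.b = 0
  · -- vertical line
    have ha : l.a ≠ 0 := l.nondeg.resolve_right (by simp [hb])
    unfold Line2.Mem at hlp hlq
    rw [hb] at hlp hlq
    -- p.1 = q.1
    have hpq1 : p.1 = q.1 := by
      field_simp at hlp hlq
      exact mul_left_cancel₀ ha (by simp only [zero_mul, add_zero] at hlp hlq; rw [hlp, hlq])
    by_cases hc : l.c = 0
    · -- line is x = 0, no interior point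
      intro r hr r' hr'
      exfalso
      obtain ⟨⟨_, hr1, _⟩, hmem⟩ := hr
      unfold Line2.Mem at hmem
      rw [hb, hc] at hmem
      simp only [zero_mul, add_zero] at hmem
      exact hr1 ((mul_eq_zero.1 hmem).resolve_left ha)
    · -- x = c/a ≠ 0, p.2 = q.2 = 0 forced, so p = q contradiction
      exfalso
      have hp1' : p.1 ≠ 0 := by
        intro h; rw [h, mul_zero] at hlp; simp at hlp; exact hc hlp.symm
      have hq1' : q.1 ≠ 0 := by
        intro h; rw [h, mul_zero] at hlq; simp at hlq; exact hc hlq.symm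
      have hp2' : p.2 = 0 := hpb.resolve_left hp1'
      have hq2' : q.2 = 0 := hqb.resolve_left hq1'
      exact hpq (Prod.ext hpq1 (hp2'.trans hq2'.symm))
  · by_cases ha : l.a = 0
    · -- horizontal line, symmetric
      unfold Line2.Mem at hlp hlq
      rw [ha] at hlp hlq
      simp only [zero_mul, zero_add] at hlp hlq
      have hpq2 : p.2 = q.2 := mul_left_cancel₀ hb (by rw [hlp, hlq])
      by_cases hc : l.c = 0
      · intro r hr r' hr'
        exfalso
        obtain ⟨⟨_, _, hr2⟩, hmem⟩ := hr
        unfold Line2.Mem at hmem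
        rw [ha, hc] at hmem
        simp only [zero_mul, zero_add] at hmem
        rcases mul_eq_zero.1 hmem with h|h
        · exact hb h
        · exact hr2 h
      · exfalso
        have hp2' : p.2 ≠ 0 := by
          intro h; rw [h, mul_zero] at hlp; exact hc hlp.symm
        have hq2' : q.2 ≠ 0 := by
          intro h; rw [h, mul_zero] at hlq; exact hc hlq.symm
        have hp1' : p.1 = 0 := hpb.resolve_right hp2'
        have hq1' : q.1 = 0 := hqb.resolve_right hq2'
        exact hpq (Prod.ext (hp1'.trans hq1'.symm) hpq2)
    · -- general line, a ≠ 0, b ≠ 0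
      unfold Line2.Mem at hlp hlq
      by_cases hc : l.c = 0
      · -- then p = q = (0,0), contradiction
        exfalso
        have hp00 : p = (0, 0) := by
          rcases hpb with h|h
          · refine Prod.ext h ?_
            rw [h, mul_zero, zero_add, hc] at hlp
            exact (mul_eq_zero.1 hlp).resolve_left hb
          · refine Prod.ext ?_ h
            rw [h, mul_zero, add_zero, hc] at hlp
            exact (mul_eq_zero.1 hlp).resolve_left ha
        have hq00 : q = (0, 0) := by
          rcases hqb with h|h
          · refine Prod.ext h ?_
            rw [h, mul_zero, zero_add, hc] at hlq
            exact (mul_eq_zero.1 hlq).resolve_left hb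
          · refine Prod.ext ?_ h
            rw [h, mul_zero, add_zero, hc] at hlq
            exact (mul_eq_zero.1 hlq).resolve_left ha
        exact hpq (hp00.trans hq00.symm)
      · -- a, b, c all nonzero
        -- get x-intercept α = 2^s and y-intercept β = 2^t
        have hint : ∃ s t : ℕ, l.a * 2^s = l.c ∧ l.b * 2^t = l.c := by
          -- classify p and q
          have class_pt : ∀ z : ℝ × ℝ, z.1 ∈ expSet n → z.2 ∈ expSet n →
              (z.1 = 0 ∨ z.2 = 0) → l.a * z.1 + l.b * z.2 = l.c →
              (∃ t : ℕ, z.1 = 0 ∧ z.2 = 2^t ∧ l.b * 2^t = l.c) ∨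
              (∃ s : ℕ, z.2 = 0 ∧ z.1 = 2^s ∧ l.a * 2^s = l.c) := by
            rintro z hz1 hz2 (h|h) hmem
            · left
              rw [h, mul_zero, zero_add] at hmem
              rcases mem_expSet' hz2 with h2|⟨t, ht⟩
              · rw [h2, mul_zero] at hmem; exact absurd hmem.symm hc
              · exact ⟨t, h, ht, by rw [← ht]; exact hmem⟩
            · right
              rw [h, mul_zero, add_zero] at hmem
              rcases mem_expSet' hz1 with h1|⟨s, hs⟩
              · rw [h1, mul_zero] at hmem; exact absurd hmem.symm hc
              · exact ⟨s, h, hs, by rw [← hs]; exact hmem⟩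
          rcases class_pt p hp1 hp2 hpb hlp with ⟨t, hpt0, hpt, hbt⟩ | ⟨s, hps0, hps, has⟩
          · rcases class_pt q hq1 hq2 hqb hlq with ⟨t', hqt0, hqt, hbt'⟩ | ⟨s, hqs0, hqs, has⟩
            · -- both on y-axis: p = q
              exfalso
              have : (2:ℝ)^t = 2^t' := mul_left_cancel₀ hb (hbt.trans hbt'.symm)
              exact hpq (Prod.ext (hpt0.trans hqt0.symm) (by rw [hpt, hqt, this]))
            · exact ⟨s, t, has, hbt⟩
          · rcases class_pt q hq1 hq2 hqb hlq with ⟨t, hqt0, hqt, hbt⟩ | ⟨s', hqs0, hqs, has'⟩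
            · exact ⟨s, t, has, hbt⟩
            · exfalso
              have : (2:ℝ)^s = 2^s' := mul_left_cancel₀ ha (has.trans has'.symm)
              exact hpq (Prod.ext (by rw [hps, hqs, this]) (hps0.trans hqs0.symm))
        obtain ⟨s, t, has, hbt⟩ := hint
        -- each interior point on l equals (2^(s-1), 2^(t-1))
        have pinned : ∀ r ∈ S, r = ((2:ℝ)^s / 2, (2:ℝ)^t / 2) := by
          intro r hr
          obtain ⟨i, j, rfl⟩ := interior_pow r hr
          obtain ⟨-, hmem⟩ := hr
          unfold Line2.Mem at hmem
          simp only at hmem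
          have ps2 : (0:ℝ) < 2^s := by positivity
          have pt2 : (0:ℝ) < 2^t := by positivity
          have ha' : l.a = l.c / 2^s := by field_simp; linarith [has]
          have hb' : l.b = l.c / 2^t := by field_simp; linarith [hbt]
          rw [ha', hb'] at hmem
          have hsum : (2:ℝ)^i/2^s + 2^j/2^t = 1 := by
            have hc' : l.c ≠ 0 := hc
            field_simp at hmem ⊢
            have : l.c * ((2:ℝ)^i * 2^t + 2^j * 2^s) = l.c * (2^s * 2^t) := by
              ring_nf
              ring_nf at hmem
              linear_combination l.c * hmem
            have := mul_left_cancel₀ hc' this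
            linarith [this]
          obtain ⟨his, hjt⟩ := key_sum hsum
          refine Prod.ext ?_ ?_
          · simp only
            rw [← his, pow_succ]
            field_simp
          · simp only
            rw [← hjt, pow_succ]
            field_simp
        intro r hr r' hr'
        rw [pinned r hr, pinned r' hr']
end

section
/- For n ≥ 2, let S_n = {i² : 0 ≤ i ≤ n−1} ⊆ ℝ and let Γ_quad,n = S_n × S_n ⊆ ℝ². Then every affine line in ℝ² that contains two boundary points of Γ_quad,n contains at most 3 · n^{(4/3)·log 3/log 5} interior points of Γ_quad,n; in particular, Γ_quad,n is Δ-generic for some Δ = Δ(n) with Δ(n)/n → 0 as n → ∞. -/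
set_option maxHeartbeats 1000000

open scoped Classical

def Fcirc (g : ℕ) : Finset (ℕ × ℕ) :=
  (Finset.Icc 1 g ×ˢ Finset.Icc 1 g).filter (fun p => p.1^2 + p.2^2 = g^2)

lemma circle_id (N p1 p2 q1 q2 r1 r2 : ℝ)
    (h1 : p1^2+p2^2 = N) (h2 : q1^2+q2^2 = N) (h3 : r1^2+r2^2 = N) :
    ((q1-p1)^2+(q2-p2)^2) * ((r1-p1)^2+(r2-p2)^2) * ((r1-q1)^2+(r2-q2)^2)
      = 4*N*((q1-p1)*(r2-p2) - (q2-p2)*(r1-p1))^2 := by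
  linear_combination
    (4*((q1-p1)*(r2-p2) - (q2-p2)*(r1-p1))^2 - ((1)*q1^2*r1^2 + (-2)*q1^2*r1*p1 + (1)*q1^2*r2^2 + (-2)*q1^2*r2*p2 + (1)*q1^2*p1^2 + (1)*q1^2*p2^2 + (-2)*q1*r1^3 + (2)*q1*r1^2*p1 + (-2)*q1*r1*r2^2 + (4)*q1*r1*r2*p2 + (2)*q1*r1*p1^2 + (-2)*q1*r1*p2^2 + (-2)*q1*r2^2*p1 + (4)*q1*r2*p1*p2 + (-2)*q1*p1^3 + (-2)*q1*p1*p2^2 + (1)*q2^2*r1^2 + (-2)*q2^2*r1*p1 + (1)*q2^2*r2^2 + (-2)*q2^2*r2*p2 + (1)*q2^2*p1^2 + (1)*q2^2*p2^2 + (-2)*q2*r1^2*r2 + (-2)*q2*r1^2*p2 + (4)*q2*r1*r2*p1 + (4)*q2*r1*p1*p2 + (-2)*q2*r2^3 + (2)*q2*r2^2*p2 + (-2)*q2*r2*p1^2 + (2)*q2*r2*p2^2 + (-2)*q2*p1^2*p2 + (-2)*q2*p2^3 + (1)*r1^4 + (2)*r1^3*p1 + (2)*r1^2*r2^2 + (-2)*r1^2*r2*p2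 + (-5)*r1^2*p1^2 + (3)*r1^2*p2^2 + (2)*r1*r2^2*p1 + (-8)*r1*r2*p1*p2 + (1)*r2^4 + (-2)*r2^3*p2 + (-1)*r2^2*p1^2 + (-1)*r2^2*p2^2 + (4)*r2*p1^2*p2 + (4)*r2*p2^3 + (2)*p1^4 + (-2)*p2^4) - ((4)*q1*q2*r1*p2 + (4)*q1*q2*r2*p1 + (-8)*q1*q2*p1*p2 + (-2)*q1*r1^2*p1 + (-4)*q1*r1*p2^2 + (-2)*q1*r2^2*p1 + (4)*q1*r2*p1*p2 + (2)*q1*p1^3 + (2)*q1*p1*p2^2 + (-4)*q2^2*r1*p1 + (4)*q2^2*r2*p2 + (4)*q2^2*p1^2 + (-4)*q2^2*p2^2 + (-2)*q2*r1^2*p2 + (4)*q2*r1*p1*p2 + (-2)*q2*r2^2*p2 + (-4)*q2*r2*p1^2 + (2)*q2*p1^2*p2 + (2)*q2*p2^3 + (2)*r1^2*p1^2 + (2)*r1^2*p2^2 + (2)*r2^2*p1^2 + (2)*r2^2*p2^2 + (-4)*r2*p1^2*p2 + (-4)*r2*p2^3 + (-2)*p1^4 + (2)*p2^4)) * h1 +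 ((1)*q1^2*r1^2 + (-2)*q1^2*r1*p1 + (1)*q1^2*r2^2 + (-2)*q1^2*r2*p2 + (1)*q1^2*p1^2 + (1)*q1^2*p2^2 + (-2)*q1*r1^3 + (2)*q1*r1^2*p1 + (-2)*q1*r1*r2^2 + (4)*q1*r1*r2*p2 + (2)*q1*r1*p1^2 + (-2)*q1*r1*p2^2 + (-2)*q1*r2^2*p1 + (4)*q1*r2*p1*p2 + (-2)*q1*p1^3 + (-2)*q1*p1*p2^2 + (1)*q2^2*r1^2 + (-2)*q2^2*r1*p1 + (1)*q2^2*r2^2 + (-2)*q2^2*r2*p2 + (1)*q2^2*p1^2 + (1)*q2^2*p2^2 + (-2)*q2*r1^2*r2 + (-2)*q2*r1^2*p2 + (4)*q2*r1*r2*p1 + (4)*q2*r1*p1*p2 + (-2)*q2*r2^3 + (2)*q2*r2^2*p2 + (-2)*q2*r2*p1^2 + (2)*q2*r2*p2^2 + (-2)*q2*p1^2*p2 + (-2)*q2*p2^3 + (1)*r1^4 + (2)*r1^3*p1 + (2)*r1^2*r2^2 + (-2)*r1^2*r2*p2 + (-5)*r1^2*p1^2 + (3)*r1^2*p2^2 +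 (2)*r1*r2^2*p1 + (-8)*r1*r2*p1*p2 + (1)*r2^4 + (-2)*r2^3*p2 + (-1)*r2^2*p1^2 + (-1)*r2^2*p2^2 + (4)*r2*p1^2*p2 + (4)*r2*p2^3 + (2)*p1^4 + (-2)*p2^4) * h2 + ((4)*q1*q2*r1*p2 + (4)*q1*q2*r2*p1 + (-8)*q1*q2*p1*p2 + (-2)*q1*r1^2*p1 + (-4)*q1*r1*p2^2 + (-2)*q1*r2^2*p1 + (4)*q1*r2*p1*p2 + (2)*q1*p1^3 + (2)*q1*p1*p2^2 + (-4)*q2^2*r1*p1 + (4)*q2^2*r2*p2 + (4)*q2^2*p1^2 + (-4)*q2^2*p2^2 + (-2)*q2*r1^2*p2 + (4)*q2*r1*p1*p2 + (-2)*q2*r2^2*p2 + (-4)*q2*r2*p1^2 + (2)*q2*p1^2*p2 + (2)*q2*p2^3 + (2)*r1^2*p1^2 + (2)*r1^2*p2^2 + (2)*r2^2*p1^2 + (2)*r2^2*p2^2 + (-4)*r2*p1^2*p2 + (-4)*r2*p2^3 + (-2)*p1^4 + (2)*p2^4) * h3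
lemma sqz (x u y v : ℝ) (h : (x-u)^2+(y-v)^2 = 0) : x = u ∧ y = v := by
  constructor <;> nlinarith [sq_nonneg (x-u), sq_nonneg (y-v)]

lemma no_three (g : ℕ) (hg : 1 ≤ g) (δ : ℝ) (hδpos : 0 < δ) (hδ3 : δ ^ (3:ℕ) = (g:ℝ)/2)
    (a b c : ℕ × ℕ) (hab : a ≠ b) (hac : a ≠ c) (hbc : b ≠ c)
    (haeq : a.1^2 + a.2^2 = g^2) (hbeq : b.1^2 + b.2^2 = g^2) (hceq : c.1^2 + c.2^2 = g^2)
    (hA : ((b.1:ℝ)-a.1)^2+((b.2:ℝ)-a.2)^2 < 2*δ^2)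
    (hB : ((c.1:ℝ)-a.1)^2+((c.2:ℝ)-a.2)^2 < 2*δ^2)
    (hC : ((c.1:ℝ)-b.1)^2+((c.2:ℝ)-b.2)^2 < 2*δ^2) : False := by
  have hg' : (1:ℝ) ≤ (g:ℝ) := by exact_mod_cast hg
  have hglb : (1:ℝ) ≤ (g:ℝ)^2 := by nlinarith [hg', sq_nonneg ((g:ℝ)-1)]
  have haeq' : (a.1:ℝ)^2 + (a.2:ℝ)^2 = (g:ℝ)^2 := by exact_mod_cast haeq
  have hbeq' : (b.1:ℝ)^2 + (b.2:ℝ)^2 = (g:ℝ)^2 := by exact_mod_cast hbeq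
  have hceq' : (c.1:ℝ)^2 + (c.2:ℝ)^2 = (g:ℝ)^2 := by exact_mod_cast hceq
  have hid := circle_id ((g:ℝ)^2) (a.1:ℝ) (a.2:ℝ) (b.1:ℝ) (b.2:ℝ) (c.1:ℝ) (c.2:ℝ)
    haeq' hbeq' hceq'
  have hDcast : (((b.1:ℝ) - a.1) * ((c.2:ℝ) - a.2) - ((b.2:ℝ) - a.2) * ((c.1:ℝ) - a.1))
      = ((((b.1:ℤ) - a.1) * ((c.2:ℤ) - a.2) - ((b.2:ℤ) - a.2) * ((c.1:ℤ) - a.1) : ℤ) : ℝ) := by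
    push_cast; ring
  set Dz : ℤ := ((b.1:ℤ) - a.1) * ((c.2:ℤ) - a.2) - ((b.2:ℤ) - a.2) * ((c.1:ℤ) - a.1) with hDzdef
  have hDne : Dz ≠ 0 := by
    intro h0
    rw [hDcast, h0] at hid
    norm_num at hid
    rcases hid with h | h
    · rcases h with h | h
      · obtain ⟨e1, e2⟩ := sqz _ _ _ _ h
        exact hab (Prod.ext (by exact_mod_cast e1.symm) (by exact_mod_cast e2.symm))
      · obtain ⟨e1, e2⟩ := sqz _ _ _ _ h
        exact hac (Prod.ext (by exact_mod_cast e1.symm) (by exact_mod_cast e2.symm))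
    · obtain ⟨e1, e2⟩ := sqz _ _ _ _ h
      exact hbc (Prod.ext (by exact_mod_cast e1.symm) (by exact_mod_cast e2.symm))
  have hD1 : (1:ℝ) ≤ (Dz:ℝ)^2 := by
    have h1 : (1:ℤ) ≤ Dz^2 := by rcases hDne.lt_or_gt with h | h <;> nlinarith
    exact_mod_cast h1
  have hle : (((b.1:ℝ)-a.1)^2+((b.2:ℝ)-a.2)^2) * (((c.1:ℝ)-a.1)^2+((c.2:ℝ)-a.2)^2)
      * (((c.1:ℝ)-b.1)^2+((c.2:ℝ)-b.2)^2) ≤ (2*δ^2) * (2*δ^2) * (2*δ^2) :=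
    mul_le_mul (mul_le_mul hA.le hB.le (by positivity) (by positivity)) hC.le
      (by positivity) (by positivity)
  have hABC : (((b.1:ℝ)-a.1)^2+((b.2:ℝ)-a.2)^2) * (((c.1:ℝ)-a.1)^2+((c.2:ℝ)-a.2)^2)
      * (((c.1:ℝ)-b.1)^2+((c.2:ℝ)-b.2)^2) = 4*(g:ℝ)^2*(Dz:ℝ)^2 := by
    rw [hid, hDcast]
  have hc8 : (2*δ^2) * (2*δ^2) * (2*δ^2) = 2*(g:ℝ)^2 := by
    linear_combination (8*(δ^(3:ℕ) + (g:ℝ)/2)) * hδ3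
  have hmul : 4*(g:ℝ)^2*1 ≤ 4*(g:ℝ)^2*(Dz:ℝ)^2 :=
    mul_le_mul_of_nonneg_left hD1 (by positivity)
  linarith

lemma Fcirc_card_le (g : ℕ) : (Fcirc g).card ≤ g := by
  have h : (Fcirc g).card ≤ (Finset.Icc 1 g).card := by
    apply Finset.card_le_card_of_injOn Prod.fst
    · intro p hp
      simp only [Fcirc, Finset.mem_coe, Finset.mem_filter, Finset.mem_product] at hp
      exact hp.1.1
    · intro p hp q hq h1
      simp only [Fcirc, Finset.mem_coe, Finset.mem_filter, Finset.mem_product] at hp hq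
      have h2 : p.2 ^ 2 = q.2 ^ 2 := by
        have e1 := hp.2; have e2 := hq.2
        rw [h1] at e1; omega
      have := Nat.pow_left_injective (by norm_num : 2 ≠ 0) h2
      exact Prod.ext h1 this
  simpa using h

lemma Fcirc_card_le_arc (g : ℕ) :
    ((Fcirc g).card : ℝ) ≤ 8 * (g:ℝ) ^ ((2:ℝ)/3) + 4 := by
  rcases Nat.eq_zero_or_pos g with hg | hg
  · subst hg
    have : Fcirc 0 = ∅ := by simp [Fcirc]
    rw [this]
    simp
  have hg1 : (1:ℝ) ≤ (g:ℝ) := by exact_mod_cast hg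
  have hgpos : (0:ℝ) < (g:ℝ)/2 := by linarith
  set δ : ℝ := ((g:ℝ)/2) ^ (((3:ℕ):ℝ)⁻¹) with hδ
  have hδpos : 0 < δ := Real.rpow_pos_of_pos hgpos _
  have hδ3 : δ ^ (3:ℕ) = (g:ℝ)/2 := Real.rpow_inv_natCast_pow (le_of_lt hgpos) (by norm_num)
  set F1 := (Fcirc g).filter (fun p => p.1 ≤ p.2) with hF1
  set F2 := (Fcirc g).filter (fun p => ¬ p.1 ≤ p.2) with hF2
  -- membership facts
  have hmem : ∀ p ∈ Fcirc g, 1 ≤ p.1 ∧ p.1 ≤ g ∧ 1 ≤ p.2 ∧ p.2 ≤ g ∧ p.1^2 + p.2^2 = g^2 := by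
    intro p hp
    simp only [Fcirc, Finset.mem_filter, Finset.mem_product, Finset.mem_Icc] at hp
    tauto
  -- chord bound for two points of F1 in the same bucket
  have chord : ∀ u ∈ F1, ∀ v ∈ F1, ⌊(u.1:ℝ)/δ⌋₊ = ⌊(v.1:ℝ)/δ⌋₊ →
      ((u.1:ℝ)-v.1)^2 + ((u.2:ℝ)-v.2)^2 < 2*δ^2 := by
    intro u hu v hv hb
    simp only [hF1, Finset.mem_filter] at hu hv
    obtain ⟨hu1, hu1g, hu2, hu2g, hueq⟩ := hmem u hu.1
    obtain ⟨hv1, hv1g, hv2, hv2g, hveq⟩ := hmem v hv.1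
    have huxy : (u.1:ℝ) ≤ (u.2:ℝ) := by exact_mod_cast hu.2
    have hvxy : (v.1:ℝ) ≤ (v.2:ℝ) := by exact_mod_cast hv.2
    have hu1' : (1:ℝ) ≤ (u.1:ℝ) := by exact_mod_cast hu1
    have hv1' : (1:ℝ) ≤ (v.1:ℝ) := by exact_mod_cast hv1
    have hueq' : (u.1:ℝ)^2 + (u.2:ℝ)^2 = (g:ℝ)^2 := by exact_mod_cast hueq
    have hveq' : (v.1:ℝ)^2 + (v.2:ℝ)^2 = (g:ℝ)^2 := by exact_mod_cast hveq
    -- |Δx| < δ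
    have ha : (0:ℝ) ≤ (u.1:ℝ)/δ := by positivity
    have hb' : (0:ℝ) ≤ (v.1:ℝ)/δ := by positivity
    have h1 : (u.1:ℝ)/δ - (v.1:ℝ)/δ < 1 := by
      have fa := Nat.lt_floor_add_one ((u.1:ℝ)/δ)
      have fb := Nat.floor_le hb'
      rw [hb] at fa
      linarith
    have h2 : (v.1:ℝ)/δ - (u.1:ℝ)/δ < 1 := by
      have fa := Nat.lt_floor_add_one ((v.1:ℝ)/δ)
      have fb := Nat.floor_le ha
      rw [← hb] at fa
      linarith
    have hdx : ((u.1:ℝ) - v.1)^2 < δ^2 := by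
      have h3 : ((u.1:ℝ) - v.1)/δ < 1 := by rw [sub_div]; exact h1
      have h4 : ((v.1:ℝ) - u.1)/δ < 1 := by rw [sub_div]; exact h2
      have h5 : (u.1:ℝ) - v.1 < δ := by
        have := (div_lt_one hδpos).mp h3; linarith
      have h6 : (v.1:ℝ) - u.1 < δ := by
        have := (div_lt_one hδpos).mp h4; linarith
      have := sq_lt_sq' (by linarith : -δ < (u.1:ℝ) - v.1) h5
      simpa [sq] using (by nlinarith [this] : ((u.1:ℝ) - v.1)^2 < δ^2)
    -- Δy² ≤ Δx²
    have hdy : ((u.2:ℝ) - v.2)^2 ≤ ((u.1:ℝ) - v.1)^2 := by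
      have hT : (0:ℝ) < (u.2:ℝ) + v.2 := by linarith
      have hS : (0:ℝ) ≤ (u.1:ℝ) + v.1 := by linarith
      have hST : (u.1:ℝ) + v.1 ≤ (u.2:ℝ) + v.2 := by linarith
      have key : ((u.2:ℝ)-v.2)*((u.2:ℝ)+v.2) = -(((u.1:ℝ)-v.1)*((u.1:ℝ)+v.1)) := by
        linear_combination hueq' - hveq'
      have h7 : ((u.2:ℝ)-v.2)^2*((u.2:ℝ)+v.2)^2 = ((u.1:ℝ)-v.1)^2*((u.1:ℝ)+v.1)^2 := by
        linear_combination (((u.2:ℝ)-v.2)*((u.2:ℝ)+v.2) - ((u.1:ℝ)-v.1)*((u.1:ℝ)+v.1)) * key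
      have h8 : ((u.1:ℝ)+v.1)^2 ≤ ((u.2:ℝ)+v.2)^2 := pow_le_pow_left₀ hS hST 2
      have h9 : ((u.2:ℝ)-v.2)^2*((u.2:ℝ)+v.2)^2 ≤ ((u.1:ℝ)-v.1)^2*((u.2:ℝ)+v.2)^2 := by
        calc ((u.2:ℝ)-v.2)^2*((u.2:ℝ)+v.2)^2 = ((u.1:ℝ)-v.1)^2*((u.1:ℝ)+v.1)^2 := h7
          _ ≤ ((u.1:ℝ)-v.1)^2*((u.2:ℝ)+v.2)^2 := by
              apply mul_le_mul_of_nonneg_left h8 (sq_nonneg _)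
      exact le_of_mul_le_mul_right h9 (by positivity)
    linarith
  -- each bucket contains at most 2 points of F1
  have fiber : ∀ k ∈ F1.image (fun p => ⌊(p.1:ℝ)/δ⌋₊),
      (F1.filter (fun p => ⌊(p.1:ℝ)/δ⌋₊ = k)).card ≤ 2 := by
    intro k _
    by_contra hcon
    push_neg at hcon
    obtain ⟨a, b, c, ha, hb, hc, hab, hac, hbc⟩ := Finset.two_lt_card_iff.mp hcon
    simp only [Finset.mem_filter] at ha hb hc
    obtain ⟨haF, hak⟩ := ha
    obtain ⟨hbF, hbk⟩ := hb
    obtain ⟨hcF, hck⟩ := hc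
    have hA := chord b hbF a haF (by rw [hak, hbk])
    have hB := chord c hcF a haF (by rw [hak, hck])
    have hC := chord c hcF b hbF (by rw [hbk, hck])
    simp only [hF1, Finset.mem_filter] at haF hbF hcF
    have haeq := (hmem a haF.1).2.2.2.2
    have hbeq := (hmem b hbF.1).2.2.2.2
    have hceq := (hmem c hcF.1).2.2.2.2
    exact no_three g hg δ hδpos hδ3 a b c hab hac hbc haeq hbeq hceq
      hA hB hC
  -- counting
  have himg : F1.image (fun p => ⌊(p.1:ℝ)/δ⌋₊) ⊆ Finset.range (⌊(g:ℝ)/δ⌋₊ + 1) := by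
    intro k hk
    obtain ⟨p, hp, hpk⟩ := Finset.mem_image.mp hk
    simp only [hF1, Finset.mem_filter] at hp
    obtain ⟨_, hp1g, _, _, _⟩ := hmem p hp.1
    rw [Finset.mem_range, ← hpk, Nat.lt_succ_iff]
    apply Nat.floor_le_floor
    have hple : (p.1:ℝ) ≤ (g:ℝ) := by exact_mod_cast hp1g
    gcongr
  have hcard1 : F1.card ≤ 2 * (⌊(g:ℝ)/δ⌋₊ + 1) := by
    calc F1.card ≤ 2 * (F1.image (fun p => ⌊(p.1:ℝ)/δ⌋₊)).card :=
          Finset.card_le_mul_card_image _ 2 fiber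
      _ ≤ 2 * (⌊(g:ℝ)/δ⌋₊ + 1) := by
          have := Finset.card_le_card himg
          simp only [Finset.card_range] at this
          omega
  have hcard2 : F2.card ≤ F1.card := by
    apply Finset.card_le_card_of_injOn Prod.swap
    · intro p hp
      simp only [hF2, Finset.mem_coe, Finset.mem_filter] at hp
      simp only [hF1, Finset.mem_coe, Finset.mem_filter]
      obtain ⟨h1, h1g, h2, h2g, heq⟩ := hmem p hp.1
      constructor
      · simp only [Fcirc, Finset.mem_filter, Finset.mem_product, Finset.mem_Icc]
        refine ⟨⟨⟨h2, h2g⟩, ⟨h1, h1g⟩⟩, by simpa [add_comm] using heq⟩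
      · simp only [Prod.fst_swap, Prod.snd_swap]
        omega
    · intro p _ q _ h
      exact Prod.swap_injective h
  have hsplit : (Fcirc g).card = F1.card + F2.card := by
    rw [hF1, hF2]
    exact (Finset.card_filter_add_card_filter_not _).symm
  have htot : (Fcirc g).card ≤ 4 * (⌊(g:ℝ)/δ⌋₊ + 1) := by omega
  -- to the reals
  have hreal : ((Fcirc g).card : ℝ) ≤ 4 * ((g:ℝ)/δ) + 4 := by
    have h1 : ((Fcirc g).card : ℝ) ≤ 4 * ((⌊(g:ℝ)/δ⌋₊:ℝ) + 1) := by exact_mod_cast htot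
    have h2 : (⌊(g:ℝ)/δ⌋₊:ℝ) ≤ (g:ℝ)/δ := Nat.floor_le (by positivity)
    linarith
  -- g/δ ≤ 2 g^(2/3)
  set e : ℝ := (g:ℝ) ^ (((3:ℕ):ℝ)⁻¹) with he
  have hepos : 0 < e := Real.rpow_pos_of_pos (by linarith) _
  have he3 : e ^ (3:ℕ) = (g:ℝ) := Real.rpow_inv_natCast_pow (by linarith) (by norm_num)
  have heδ : e/2 ≤ δ := by
    apply le_of_pow_le_pow_left₀ (n := 3) (by norm_num) (le_of_lt hδpos)
    rw [hδ3]
    have : (e/2)^(3:ℕ) = (e^(3:ℕ))/8 := by ring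
    rw [this, he3]
    linarith
  have he2 : e^(2:ℕ) = (g:ℝ) ^ ((2:ℝ)/3) := by
    rw [he, ← Real.rpow_natCast ((g:ℝ) ^ (((3:ℕ):ℝ)⁻¹)) 2, ← Real.rpow_mul (by positivity)]
    norm_num
  have hgd : (g:ℝ)/δ ≤ 2 * (g:ℝ) ^ ((2:ℝ)/3) := by
    have h1 : (g:ℝ)/δ ≤ (g:ℝ)/(e/2) := by
      gcongr
    have h2 : (g:ℝ)/(e/2) = 2 * ((g:ℝ)/e) := by ring
    have h3 : (g:ℝ)/e = e^(2:ℕ) := by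
      rw [← he3]
      field_simp
    rw [h2, h3, he2] at h1
    exact h1
  linarith

lemma log5_pos : (0:ℝ) < Real.log 5 := Real.log_pos (by norm_num)
lemma log3_pos : (0:ℝ) < Real.log 3 := Real.log_pos (by norm_num)

lemma log_cmp1 : 4 * Real.log 3 ≤ 3 * Real.log 5 := by
  have h : Real.log (3^(4:ℕ)) ≤ Real.log (5^(3:ℕ)) := by
    apply Real.log_le_log (by norm_num)
    norm_num
  rwa [Real.log_pow, Real.log_pow] at h

lemma log_cmp2 : 6 * Real.log 5 ≤ 9 * Real.log 3 := by
  have h : Real.log (5^(6:ℕ)) ≤ Real.log (3^(9:ℕ)) := by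
    apply Real.log_le_log (by norm_num)
    norm_num
  rwa [Real.log_pow, Real.log_pow] at h

lemma log_cmp3 : 2 * Real.log 5 ≤ 4 * Real.log 3 := by
  have h : Real.log (5^(2:ℕ)) ≤ Real.log (3^(4:ℕ)) := by
    apply Real.log_le_log (by norm_num)
    norm_num
  rwa [Real.log_pow, Real.log_pow] at h

lemma log_cmp4 : Real.log 4 + 4 * Real.log 5 ≤ 8 * Real.log 3 := by
  have h : Real.log ((2500:ℝ)) ≤ Real.log (3^(8:ℕ)) := by
    apply Real.log_le_log (by norm_num)
    norm_num
  rw [Real.log_pow] at h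
  have h2 : Real.log (2500:ℝ) = Real.log 4 + Real.log (5^(4:ℕ)) := by
    rw [← Real.log_mul (by norm_num) (by norm_num)]
    norm_num
  rw [h2, Real.log_pow] at h
  push_cast at h ⊢; linarith

noncomputable abbrev alph : ℝ := (4 / 3 : ℝ) * Real.log 3 / Real.log 5

lemma alph_mul_log5 : alph * Real.log 5 = (4/3) * Real.log 3 := by
  have := log5_pos.ne'
  field_simp [alph]

lemma alph_le_one : alph ≤ 1 := by
  rw [alph, div_le_one log5_pos]
  linarith [log_cmp1]

lemma alph_lt_one : alph < 1 := by
  rw [alph, div_lt_one log5_pos]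
  have h : Real.log (3^(4:ℕ)) < Real.log (5^(3:ℕ)) := by
    apply Real.log_lt_log (by norm_num)
    norm_num
  rw [Real.log_pow, Real.log_pow] at h; push_cast at h; linarith

lemma two_thirds_le_alph : (2:ℝ)/3 ≤ alph := by
  rw [alph, le_div_iff₀ log5_pos]
  linarith [log_cmp3]

lemma small_case {x : ℝ} (h1 : 1 ≤ x) (h2 : x ≤ 5^(6:ℕ)) : x ≤ 3 * x ^ alph := by
  have hx : (0:ℝ) < x := by linarith
  have hA1 : (0:ℝ) ≤ 1 - alph := by linarith [alph_le_one]
  have hlogx : Real.log x ≤ 6 * Real.log 5 := by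
    calc Real.log x ≤ Real.log (5^(6:ℕ)) := Real.log_le_log hx h2
      _ = 6 * Real.log 5 := by rw [Real.log_pow]; push_cast; ring
  have hlogx0 : 0 ≤ Real.log x := Real.log_nonneg h1
  have key : x ^ ((1:ℝ) - alph) ≤ 3 := by
    rw [Real.rpow_def_of_pos hx, mul_comm]
    calc Real.exp ((1 - alph) * Real.log x) ≤ Real.exp (Real.log 3) := by
          apply Real.exp_le_exp.mpr
          have step1 : (1 - alph) * Real.log x ≤ (1 - alph) * (6 * Real.log 5) :=
            mul_le_mul_of_nonneg_left hlogx hA1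
          have step2 : (1 - alph) * (6 * Real.log 5) = 6 * Real.log 5 - 8 * Real.log 3 := by
            have := alph_mul_log5
            nlinarith [alph_mul_log5]
          have step3 : 6 * Real.log 5 - 8 * Real.log 3 ≤ Real.log 3 := by linarith [log_cmp2]
          linarith
      _ = 3 := Real.exp_log (by norm_num)
  calc x = x ^ alph * x ^ ((1:ℝ) - alph) := by
        rw [← Real.rpow_add hx]; norm_num
    _ ≤ x ^ alph * 3 := by
        apply mul_le_mul_of_nonneg_left key (Real.rpow_nonneg hx.le _)
    _ = 3 * x ^ alph := by ring

lemma large_case {x : ℝ} (h2 : (5:ℝ)^(6:ℕ) ≤ x) : 12 * x ^ ((2:ℝ)/3) ≤ 3 * x ^ alph := by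
  have hx : (0:ℝ) < x := by nlinarith
  have hA2 : (0:ℝ) ≤ alph - 2/3 := by linarith [two_thirds_le_alph]
  have hlogx : 6 * Real.log 5 ≤ Real.log x := by
    calc (6:ℝ) * Real.log 5 = Real.log (5^(6:ℕ)) := by rw [Real.log_pow]; push_cast; ring
      _ ≤ Real.log x := Real.log_le_log (by norm_num) h2
  have key : (4:ℝ) ≤ x ^ (alph - (2:ℝ)/3) := by
    rw [Real.rpow_def_of_pos hx, mul_comm]
    calc (4:ℝ) = Real.exp (Real.log 4) := (Real.exp_log (by norm_num)).symm
      _ ≤ Real.exp ((alph - 2/3) * Real.log x) := by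
          apply Real.exp_le_exp.mpr
          have step1 : (alph - 2/3) * (6 * Real.log 5) ≤ (alph - 2/3) * Real.log x :=
            mul_le_mul_of_nonneg_left hlogx hA2
          have step2 : (alph - 2/3) * (6 * Real.log 5) = 8 * Real.log 3 - 4 * Real.log 5 := by
            nlinarith [alph_mul_log5]
          linarith [log_cmp4]
  have hsplit : x ^ alph = x ^ ((2:ℝ)/3) * x ^ (alph - (2:ℝ)/3) := by
    rw [← Real.rpow_add hx]; ring_nf
  rw [hsplit]
  have h23 : (0:ℝ) ≤ x ^ ((2:ℝ)/3) := Real.rpow_nonneg hx.le _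
  calc 12 * x ^ ((2:ℝ)/3) = 3 * (x ^ ((2:ℝ)/3) * 4) := by ring
    _ ≤ 3 * (x ^ ((2:ℝ)/3) * x ^ (alph - (2:ℝ)/3)) := by
        apply mul_le_mul_of_nonneg_left (mul_le_mul_of_nonneg_left key h23) (by norm_num)
    _ = 3 * (x ^ ((2:ℝ)/3) * x ^ (alph - (2:ℝ)/3)) := rfl

lemma tendsto_alph :
    Filter.Tendsto (fun n : ℕ => 3 * (n:ℝ) ^ alph / (n:ℝ)) Filter.atTop (nhds 0) := by
  have h1 : Filter.Tendsto (fun x : ℝ => 3 * x ^ (alph - 1)) Filter.atTop (nhds 0) := by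
    have := (tendsto_rpow_neg_atTop (by linarith [alph_lt_one] : (0:ℝ) < 1 - alph)).const_mul (3:ℝ)
    simpa [mul_comm] using this.congr (fun x => by rw [neg_sub])
  have h2 := h1.comp (tendsto_natCast_atTop_atTop (R := ℝ))
  apply h2.congr'
  filter_upwards [Filter.eventually_ge_atTop 1] with n hn
  have hn' : (0:ℝ) < (n:ℝ) := by exact_mod_cast hn
  simp only [Function.comp]
  rw [Real.rpow_sub hn', Real.rpow_one]
  field_simp

lemma mem_quadSet {n : ℕ} {x : ℝ} (hx : x ∈ quadSet n) : ∃ i : ℕ, i < n ∧ ((i:ℝ))^2 = x := by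
  simpa [quadSet, Finset.mem_image, Finset.mem_range] using hx

lemma quadSet_nonneg {n : ℕ} {x : ℝ} (hx : x ∈ quadSet n) : 0 ≤ x := by
  obtain ⟨i, _, hi⟩ := mem_quadSet hx
  rw [← hi]; positivity

lemma main_bound (n : ℕ) (hn : 2 ≤ n) (l : Line2)
    (h : ∃ p q : ℝ × ℝ, p ≠ q ∧ IsBoundary (↑(quadSet n ×ˢ quadSet n)) p ∧
      IsBoundary (↑(quadSet n ×ˢ quadSet n)) q ∧ l.Mem p ∧ l.Mem q) :
    (Set.ncard {r : ℝ × ℝ | IsInterior (↑(quadSet n ×ˢ quadSet n)) r ∧ l.Mem r} : ℝ)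
      ≤ 3 * (n : ℝ) ^ alph := by
  have hn1 : (1:ℝ) ≤ (n:ℝ) := by exact_mod_cast Nat.one_le_of_lt hn
  have hRHS : (0:ℝ) ≤ 3 * (n:ℝ) ^ alph := by positivity
  obtain ⟨p, q, hpq, ⟨hpΓ, hpB⟩, ⟨hqΓ, hqB⟩, hlp, hlq⟩ := h
  rw [Finset.mem_coe, Finset.mem_product] at hpΓ hqΓ
  rcases eq_or_ne l.c 0 with hc | hc
  · -- line through origin: no interior points
    have hS : {r : ℝ × ℝ | IsInterior (↑(quadSet n ×ˢ quadSet n)) r ∧ l.Mem r} = ∅ := by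
      ext r
      simp only [Set.mem_setOf_eq, Set.mem_empty_iff_false, iff_false]
      rintro ⟨⟨hrΓ, hr1, hr2⟩, hlr⟩
      rw [Finset.mem_coe, Finset.mem_product] at hrΓ
      have hr1pos : 0 < r.1 := lt_of_le_of_ne (quadSet_nonneg hrΓ.1) (Ne.symm hr1)
      have hr2pos : 0 < r.2 := lt_of_le_of_ne (quadSet_nonneg hrΓ.2) (Ne.symm hr2)
      have hlr' : l.a * r.1 + l.b * r.2 = 0 := by rw [Line2.Mem, hc] at hlr; exact hlr
      have ha : l.a ≠ 0 := by
        intro h0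
        have hb : l.b = 0 := by
          have : l.b * r.2 = 0 := by rw [h0] at hlr'; linarith
          rcases mul_eq_zero.mp this with h | h
          · exact h
          · exact absurd h (ne_of_gt hr2pos)
        rcases l.nondeg with h | h <;> [exact h h0; exact h hb]
      have hb : l.b ≠ 0 := by
        intro h0
        have ha' : l.a = 0 := by
          have : l.a * r.1 = 0 := by rw [h0] at hlr'; linarith
          rcases mul_eq_zero.mp this with h | h
          · exact h
          · exact absurd h (ne_of_gt hr1pos)
        rcases l.nondeg with h | h <;> [exact h ha'; exact h h0]
      have origin : ∀ z : ℝ × ℝ, (z.1 = 0 ∨ z.2 = 0) → l.Mem z → z = (0, 0) := by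
        intro z hzB hlz
        rw [Line2.Mem, hc] at hlz
        rcases hzB with h0 | h0
        · have : l.b * z.2 = 0 := by rw [h0] at hlz; linarith
          have h2 : z.2 = 0 := by
            rcases mul_eq_zero.mp this with h | h
            · exact absurd h hb
            · exact h
          exact Prod.ext h0 h2
        · have : l.a * z.1 = 0 := by rw [h0] at hlz; linarith
          have h1 : z.1 = 0 := by
            rcases mul_eq_zero.mp this with h | h
            · exact absurd h ha
            · exact h
          exact Prod.ext h1 h0
      exact hpq ((origin p hpB hlp).trans (origin q hqB hlq).symm)
    rw [hS]
    simpa [Set.ncard_empty] using hRHS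
  · -- the line cuts both axes at grid squares
    have classify : ∀ z : ℝ × ℝ, z.1 ∈ quadSet n → z.2 ∈ quadSet n →
        (z.1 = 0 ∨ z.2 = 0) → l.Mem z →
        (z.1 = 0 ∧ l.b * z.2 = l.c) ∨ (z.2 = 0 ∧ l.a * z.1 = l.c) := by
      intro z hz1 hz2 hzB hlz
      rw [Line2.Mem] at hlz
      rcases hzB with h0 | h0
      · left
        refine ⟨h0, ?_⟩
        rw [h0] at hlz; linarith
      · right
        refine ⟨h0, ?_⟩
        rw [h0] at hlz; linarith
    -- produce s and t
    have hst : ∃ s t : ℕ, 1 ≤ s ∧ s < n ∧ 1 ≤ t ∧ t < n ∧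
        l.a * ((s:ℝ))^2 = l.c ∧ l.b * ((t:ℝ))^2 = l.c := by
      have hcp := classify p hpΓ.1 hpΓ.2 hpB hlp
      have hcq := classify q hqΓ.1 hqΓ.2 hqB hlq
      have mk : ∀ z : ℝ × ℝ, z.1 ∈ quadSet n → z.2 ∈ quadSet n →
          (z.1 = 0 ∧ l.b * z.2 = l.c) → (z.2 = 0 ∧ l.a * z.1 = l.c) → False := by
        intro z _ _ h1 h2
        rw [h1.1] at h2
        rw [h2.1] at h1
        have := h1.2
        rw [mul_zero] at this
        exact hc this.symm
      -- we need one of each type among p, q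
      have distinct : ¬ ((p.1 = 0 ∧ l.b * p.2 = l.c) ∧ (q.1 = 0 ∧ l.b * q.2 = l.c)) := by
        rintro ⟨⟨hp1, hp2⟩, ⟨hq1, hq2⟩⟩
        have hbne : l.b ≠ 0 := by
          intro h0; rw [h0, zero_mul] at hp2; exact hc hp2.symm
        have : p.2 = q.2 := by
          have := hp2.trans hq2.symm
          exact mul_left_cancel₀ hbne this
        exact hpq (Prod.ext (hp1.trans hq1.symm) this)
      have distinct' : ¬ ((p.2 = 0 ∧ l.a * p.1 = l.c) ∧ (q.2 = 0 ∧ l.a * q.1 = l.c)) := by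
        rintro ⟨⟨hp1, hp2⟩, ⟨hq1, hq2⟩⟩
        have hane : l.a ≠ 0 := by
          intro h0; rw [h0, zero_mul] at hp2; exact hc hp2.symm
        have : p.1 = q.1 := by
          have := hp2.trans hq2.symm
          exact mul_left_cancel₀ hane this
        exact hpq (Prod.ext this (hp1.trans hq1.symm))
      -- extract from a vertical-type and a horizontal-type point
      have build : ∀ z w : ℝ × ℝ, z.1 ∈ quadSet n → z.2 ∈ quadSet n →
          w.1 ∈ quadSet n → w.2 ∈ quadSet n →
          (z.2 = 0 ∧ l.a * z.1 = l.c) → (w.1 = 0 ∧ l.b * w.2 = l.c) →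
          ∃ s t : ℕ, 1 ≤ s ∧ s < n ∧ 1 ≤ t ∧ t < n ∧
            l.a * ((s:ℝ))^2 = l.c ∧ l.b * ((t:ℝ))^2 = l.c := by
        intro z w hz1 _ _ hw2 hz hw
        obtain ⟨s, hslt, hs⟩ := mem_quadSet hz1
        obtain ⟨t, htlt, ht⟩ := mem_quadSet hw2
        have hsne : s ≠ 0 := by
          intro h0
          rw [h0] at hs
          simp at hs
          rw [← hs, mul_zero] at hz
          exact hc hz.2.symm
        have htne : t ≠ 0 := by
          intro h0
          rw [h0] at ht
          simp at ht
          rw [← ht, mul_zero] at hw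
          exact hc hw.2.symm
        exact ⟨s, t, Nat.one_le_iff_ne_zero.mpr hsne, hslt, Nat.one_le_iff_ne_zero.mpr htne,
          htlt, by rw [hs]; exact hz.2, by rw [ht]; exact hw.2⟩
      rcases hcp with hp' | hp' <;> rcases hcq with hq' | hq'
      · exact absurd ⟨hp', hq'⟩ distinct
      · exact build q p hqΓ.1 hqΓ.2 hpΓ.1 hpΓ.2 hq' hp'
      · exact build p q hpΓ.1 hpΓ.2 hqΓ.1 hqΓ.2 hp' hq'
      · exact absurd ⟨hp', hq'⟩ distinct'
    obtain ⟨s, t, hs1, hsn, ht1, htn, has, hbt⟩ := hst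
    classical
    set E : Finset (ℕ × ℕ) := (Finset.range n ×ˢ Finset.range n).filter
      (fun ij => 1 ≤ ij.1 ∧ 1 ≤ ij.2 ∧ ij.1^2 * t^2 + ij.2^2 * s^2 = s^2 * t^2) with hE
    have hsub : {r : ℝ × ℝ | IsInterior (↑(quadSet n ×ˢ quadSet n)) r ∧ l.Mem r} ⊆
        ↑(E.image (fun ij => (((ij.1:ℝ))^2, ((ij.2:ℝ))^2))) := by
      rintro r ⟨⟨hrΓ, hr1, hr2⟩, hlr⟩
      rw [Finset.mem_coe, Finset.mem_product] at hrΓ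
      obtain ⟨i, hilt, hi⟩ := mem_quadSet hrΓ.1
      obtain ⟨j, hjlt, hj⟩ := mem_quadSet hrΓ.2
      have hine : i ≠ 0 := by
        intro h0; rw [h0] at hi; simp at hi; exact hr1 hi.symm
      have hjne : j ≠ 0 := by
        intro h0; rw [h0] at hj; simp at hj; exact hr2 hj.symm
      rw [Line2.Mem, ← hi, ← hj] at hlr
      -- derive the ellipse equation over ℝ
      have hreal : ((i:ℝ))^2 * ((t:ℝ))^2 + ((j:ℝ))^2 * ((s:ℝ))^2 = ((s:ℝ))^2 * ((t:ℝ))^2 := by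
        apply mul_left_cancel₀ hc
        linear_combination ((s:ℝ)^2 * (t:ℝ)^2) * hlr - ((i:ℝ)^2 * (t:ℝ)^2) * has
          - ((j:ℝ)^2 * (s:ℝ)^2) * hbt
      have hnat : i^2 * t^2 + j^2 * s^2 = s^2 * t^2 := by exact_mod_cast hreal
      rw [Finset.mem_coe, Finset.mem_image]
      refine ⟨(i, j), ?_, ?_⟩
      · rw [hE, Finset.mem_filter, Finset.mem_product]
        exact ⟨⟨Finset.mem_range.mpr hilt, Finset.mem_range.mpr hjlt⟩,
          Nat.one_le_iff_ne_zero.mpr hine, Nat.one_le_iff_ne_zero.mpr hjne, hnat⟩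
      · exact Prod.ext hi hj
    have hfin : (Set.ncard {r : ℝ × ℝ | IsInterior (↑(quadSet n ×ˢ quadSet n)) r ∧ l.Mem r})
        ≤ E.card := by
      calc Set.ncard {r : ℝ × ℝ | IsInterior (↑(quadSet n ×ˢ quadSet n)) r ∧ l.Mem r}
          ≤ Set.ncard ↑(E.image (fun ij => (((ij.1:ℝ))^2, ((ij.2:ℝ))^2))) :=
            Set.ncard_le_ncard hsub (E.image _).finite_toSet
        _ = (E.image (fun ij => (((ij.1:ℝ))^2, ((ij.2:ℝ))^2))).card := Set.ncard_coe_finset _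
        _ ≤ E.card := Finset.card_image_le
    -- gcd reduction
    set g := Nat.gcd s t with hgdef
    have hgpos : 0 < g := Nat.gcd_pos_of_pos_left t (by omega)
    have hgle : g ≤ n := le_trans (Nat.le_of_dvd (by omega) (Nat.gcd_dvd_left s t)) (by omega)
    set s1 := s / g with hs1def
    set t1 := t / g with ht1def
    have hs1 : g * s1 = s := Nat.mul_div_cancel' (Nat.gcd_dvd_left s t)
    have ht1 : g * t1 = t := Nat.mul_div_cancel' (Nat.gcd_dvd_right s t)
    have hs1pos : 0 < s1 := by
      rcases Nat.eq_zero_or_pos s1 with h | h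
      · rw [h, mul_zero] at hs1; omega
      · exact h
    have ht1pos : 0 < t1 := by
      rcases Nat.eq_zero_or_pos t1 with h | h
      · rw [h, mul_zero] at ht1; omega
      · exact h
    have cop : Nat.Coprime s1 t1 := Nat.coprime_div_gcd_div_gcd hgpos
    have hred : ∀ ij : ℕ × ℕ, ij ∈ E → s1 ∣ ij.1 ∧ t1 ∣ ij.2 ∧
        (ij.1 / s1, ij.2 / t1) ∈ Fcirc g := by
        intro ij hij
        rw [hE, Finset.mem_filter, Finset.mem_product] at hij
        obtain ⟨⟨_, _⟩, hi1, hj1, heq⟩ := hij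
        -- reduce the equation
        have heq2 : ij.1^2 * t1^2 + ij.2^2 * s1^2 = g^2 * s1^2 * t1^2 := by
          have hgg : 0 < g^2 := by positivity
          apply Nat.eq_of_mul_eq_mul_left hgg
          have lhs : g^2 * (ij.1^2 * t1^2 + ij.2^2 * s1^2)
              = ij.1^2 * (g*t1)^2 + ij.2^2 * (g*s1)^2 := by ring
          have rhs : g^2 * (g^2 * s1^2 * t1^2) = (g*s1)^2 * (g*t1)^2 := by ring
          rw [lhs, rhs, hs1, ht1]
          exact heq
        -- divisibility
        have hdvds : s1 ∣ ij.1 := by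
          have key : (s1:ℤ)^2 ∣ (ij.1:ℤ)^2 * (t1:ℤ)^2 := by
            refine ⟨(g:ℤ)^2 * (t1:ℤ)^2 - (ij.2:ℤ)^2, ?_⟩
            have := heq2
            have hz : (ij.1:ℤ)^2 * (t1:ℤ)^2 + (ij.2:ℤ)^2 * (s1:ℤ)^2
                = (g:ℤ)^2 * (s1:ℤ)^2 * (t1:ℤ)^2 := by exact_mod_cast this
            linear_combination hz
          have key2 : s1^2 ∣ ij.1^2 * t1^2 := by
            have : ((s1^2 : ℕ):ℤ) ∣ ((ij.1^2 * t1^2 : ℕ):ℤ) := by push_cast; exact key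
            exact_mod_cast this
          have key3 : s1^2 ∣ ij.1^2 := (cop.pow 2 2).dvd_of_dvd_mul_right key2
          exact (Nat.pow_dvd_pow_iff (two_ne_zero)).mp key3
        have hdvdt : t1 ∣ ij.2 := by
          have key : (t1:ℤ)^2 ∣ (ij.2:ℤ)^2 * (s1:ℤ)^2 := by
            refine ⟨(g:ℤ)^2 * (s1:ℤ)^2 - (ij.1:ℤ)^2, ?_⟩
            have hz : (ij.1:ℤ)^2 * (t1:ℤ)^2 + (ij.2:ℤ)^2 * (s1:ℤ)^2
                = (g:ℤ)^2 * (s1:ℤ)^2 * (t1:ℤ)^2 := by exact_mod_cast heq2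
            linear_combination hz
          have key2 : t1^2 ∣ ij.2^2 * s1^2 := by
            have : ((t1^2 : ℕ):ℤ) ∣ ((ij.2^2 * s1^2 : ℕ):ℤ) := by push_cast; exact key
            exact_mod_cast this
          have key3 : t1^2 ∣ ij.2^2 := (cop.symm.pow 2 2).dvd_of_dvd_mul_right key2
          exact (Nat.pow_dvd_pow_iff (two_ne_zero)).mp key3
        obtain ⟨x, hx⟩ := hdvds
        obtain ⟨y, hy⟩ := hdvdt
        have hxv : ij.1 / s1 = x := by rw [hx]; exact Nat.mul_div_cancel_left x hs1pos
        have hyv : ij.2 / t1 = y := by rw [hy]; exact Nat.mul_div_cancel_left y ht1pos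
        have hcircle : x^2 + y^2 = g^2 := by
          have hst1 : 0 < s1^2 * t1^2 := by positivity
          apply Nat.eq_of_mul_eq_mul_left hst1
          have lhs : s1^2 * t1^2 * (x^2 + y^2) = (s1*x)^2 * t1^2 + (t1*y)^2 * s1^2 := by ring
          rw [lhs, ← hx, ← hy, heq2]; ring
        have hx1 : 1 ≤ x := by
          rcases Nat.eq_zero_or_pos x with h | h
          · rw [h, mul_zero] at hx; omega
          · exact h
        have hy1 : 1 ≤ y := by
          rcases Nat.eq_zero_or_pos y with h | h
          · rw [h, mul_zero] at hy; omega
          · exact h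
        have hxg : x ≤ g := by
          have : x^2 ≤ g^2 := by omega
          exact (Nat.pow_le_pow_iff_left (two_ne_zero)).mp this
        have hyg : y ≤ g := by
          have : y^2 ≤ g^2 := by omega
          exact (Nat.pow_le_pow_iff_left (two_ne_zero)).mp this
        refine ⟨⟨x, hx⟩, ⟨y, hy⟩, ?_⟩
        simp only [Fcirc, Finset.mem_filter, Finset.mem_product, Finset.mem_Icc, hxv, hyv]
        exact ⟨⟨⟨hx1, hxg⟩, hy1, hyg⟩, hcircle⟩
    have hEF : E.card ≤ (Fcirc g).card := by
      apply Finset.card_le_card_of_injOn (fun ij => (ij.1 / s1, ij.2 / t1))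
      · intro ij hij
        exact (hred ij hij).2.2
      · intro ij hij ij' hij' hvv
        obtain ⟨hd1, hd2, -⟩ := hred ij (Finset.mem_coe.mp hij)
        obtain ⟨hd1', hd2', -⟩ := hred ij' (Finset.mem_coe.mp hij')
        have h1 : ij.1 / s1 = ij'.1 / s1 := congrArg Prod.fst hvv
        have h2 : ij.2 / t1 = ij'.2 / t1 := congrArg Prod.snd hvv
        have e1 : ij.1 = ij'.1 := by
          rw [← Nat.mul_div_cancel' hd1, ← Nat.mul_div_cancel' hd1', h1]
        have e2 : ij.2 = ij'.2 := by
          rw [← Nat.mul_div_cancel' hd2, ← Nat.mul_div_cancel' hd2', h2]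
        exact Prod.ext e1 e2
    -- numeric finish
    rcases le_or_gt n (5^6) with hsm | hlg
    · have c1 : (Set.ncard {r : ℝ × ℝ | IsInterior (↑(quadSet n ×ˢ quadSet n)) r ∧ l.Mem r} : ℝ)
          ≤ ((Fcirc g).card : ℝ) := by exact_mod_cast le_trans hfin hEF
      have c2 : ((Fcirc g).card : ℝ) ≤ (g:ℝ) := by exact_mod_cast Fcirc_card_le g
      have c3 : (g:ℝ) ≤ (n:ℝ) := by exact_mod_cast hgle
      have c4 : (n:ℝ) ≤ 3 * (n:ℝ) ^ alph := small_case hn1 (by exact_mod_cast hsm)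
      linarith
    · have c1 : (Set.ncard {r : ℝ × ℝ | IsInterior (↑(quadSet n ×ˢ quadSet n)) r ∧ l.Mem r} : ℝ)
          ≤ ((Fcirc g).card : ℝ) := by exact_mod_cast le_trans hfin hEF
      have c2 := Fcirc_card_le_arc g
      have c3 : (g:ℝ) ^ ((2:ℝ)/3) ≤ (n:ℝ) ^ ((2:ℝ)/3) :=
        Real.rpow_le_rpow (by positivity) (by exact_mod_cast hgle) (by norm_num)
      have c4 : (1:ℝ) ≤ (n:ℝ) ^ ((2:ℝ)/3) := by
        have := Real.rpow_le_rpow (zero_le_one) hn1 (by norm_num : (0:ℝ) ≤ 2/3)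
        rwa [Real.one_rpow] at this
      have c5 : 12 * (n:ℝ) ^ ((2:ℝ)/3) ≤ 3 * (n:ℝ) ^ alph :=
        large_case (by exact_mod_cast hlg.le)
      linarith

theorem stmt15 :
    (∀ n : ℕ, 2 ≤ n → ∀ l : Line2,
      (∃ p q : ℝ × ℝ, p ≠ q ∧ IsBoundary (↑(quadSet n ×ˢ quadSet n)) p ∧
        IsBoundary (↑(quadSet n ×ˢ quadSet n)) q ∧ l.Mem p ∧ l.Mem q) →
      (Set.ncard {r : ℝ × ℝ | IsInterior (↑(quadSet n ×ˢ quadSet n)) r ∧ l.Mem r} : ℝ)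
        ≤ 3 * (n : ℝ) ^ ((4 / 3 : ℝ) * Real.log 3 / Real.log 5)) ∧
    ∃ Δ : ℕ → ℝ, (∀ n : ℕ, 2 ≤ n → 0 ≤ Δ n ∧ ∀ l : Line2,
        (∃ p q : ℝ × ℝ, p ≠ q ∧ IsBoundary (↑(quadSet n ×ˢ quadSet n)) p ∧
          IsBoundary (↑(quadSet n ×ˢ quadSet n)) q ∧ l.Mem p ∧ l.Mem q) →
        (Set.ncard {r : ℝ × ℝ | IsInterior (↑(quadSet n ×ˢ quadSet n)) r ∧ l.Mem r} : ℝ)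
          ≤ Δ n) ∧
      Filter.Tendsto (fun n : ℕ => Δ n / (n : ℝ)) Filter.atTop (nhds 0) := by
  constructor
  · intro n hn l h
    exact main_bound n hn l h
  · exact ⟨fun n => 3 * (n:ℝ) ^ alph, fun n hn =>
      ⟨by positivity, fun l h => main_bound n hn l h⟩, tendsto_alph⟩
end

section
/- For every ε > 0 there exists N such that for all integers n ≥ N, all finite sets S₁, S₂ ⊆ ℝ with |S₁| = |S₂| = n and min S₁ = min S₂ = 0 (so the omitted point (0,0) is the lower-left corner of the grid Γ = S₁ × S₂), and all integers k ≥ 2, cov_k(Γ) ≥ (4 − 2√2 − ε) · k(n−1). -/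
open scoped Classical

/-! ### Auxiliary lemmas: ranks of elements -/

noncomputable def rk (S : Finset ℝ) (x : ℝ) : ℕ := (S.filter (fun y => y ≤ x)).card

lemma rk_le_card (S : Finset ℝ) (x : ℝ) : rk S x ≤ S.card := Finset.card_filter_le _ _

lemma rk_strictMonoOn (S : Finset ℝ) {x y : ℝ} (hy : y ∈ S) (hxy : x < y) :
    rk S x < rk S y := by
  apply Finset.card_lt_card
  constructor
  · intro z hz
    simp only [Finset.mem_filter] at hz ⊢
    exact ⟨hz.1, le_trans hz.2 hxy.le⟩
  · intro hsub
    have : y ∈ S.filter (fun z => z ≤ x) := hsub (by simp [hy])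
    simp only [Finset.mem_filter] at this
    linarith [this.2]

lemma rk_injOn (S : Finset ℝ) : Set.InjOn (rk S) S := by
  intro x hx y hy hxy
  by_contra hne
  rcases lt_or_gt_of_ne hne with h | h
  · exact absurd hxy (Nat.ne_of_lt (rk_strictMonoOn S hy h))
  · exact absurd hxy.symm (Nat.ne_of_lt (rk_strictMonoOn S hx h))

lemma rk_pos {S : Finset ℝ} {x : ℝ} (hx : x ∈ S) : 1 ≤ rk S x := by
  have : x ∈ S.filter (fun y => y ≤ x) := by simp [hx]
  exact Finset.card_pos.mpr ⟨x, this⟩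

lemma sum_rk (S : Finset ℝ) : (∑ x ∈ S, rk S x) * 2 = S.card * (S.card + 1) := by
  have himg : S.image (rk S) = Finset.Icc 1 S.card := by
    apply Finset.eq_of_subset_of_card_le
    · intro i hi
      simp only [Finset.mem_image] at hi
      obtain ⟨x, hx, rfl⟩ := hi
      exact Finset.mem_Icc.mpr ⟨rk_pos hx, rk_le_card S x⟩
    · rw [Nat.card_Icc]
      rw [Finset.card_image_of_injOn (rk_injOn S)]
      omega
  have hsum : ∑ x ∈ S, rk S x = ∑ i ∈ Finset.Icc 1 S.card, i := by
    rw [← himg, Finset.sum_image (fun x hx y hy h => rk_injOn S hx hy h)]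
  rw [hsum]
  have h2 := Finset.sum_range_id_mul_two (S.card + 1)
  have h : Finset.range (S.card + 1) = insert 0 (Finset.Icc 1 S.card) := by
    ext i; simp only [Finset.mem_range, Finset.mem_insert, Finset.mem_Icc]; omega
  rw [h, Finset.sum_insert (by simp)] at h2
  simpa [Nat.mul_comm] using h2

lemma rk_zero {S : Finset ℝ} (h0 : (0:ℝ) ∈ S) (hp : ∀ x ∈ S, 0 ≤ x) : rk S 0 = 1 := by
  have : S.filter (fun y => y ≤ (0:ℝ)) = {0} := by
    ext y
    simp only [Finset.mem_filter, Finset.mem_singleton]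
    constructor
    · rintro ⟨hy, hy0⟩; exact le_antisymm hy0 (hp y hy)
    · rintro rfl; exact ⟨h0, le_refl 0⟩
  rw [rk, this, Finset.card_singleton]

/-! ### The weight function -/

noncomputable def wt (S₁ S₂ : Finset ℝ) (n : ℕ) (p : ℝ × ℝ) : ℝ :=
  if p.2 = 0 then (2 * n - rk S₁ p.1) / (4 * n)
  else if p.1 = 0 then (2 * n - rk S₂ p.2) / (4 * n)
  else 1 / (2 * n)

lemma wt_nonneg {S₁ S₂ : Finset ℝ} {n : ℕ} (h1 : S₁.card = n) (h2 : S₂.card = n)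
    (p : ℝ × ℝ) : 0 ≤ wt S₁ S₂ n p := by
  have hr1 : (rk S₁ p.1 : ℝ) ≤ n := by exact_mod_cast h1 ▸ rk_le_card S₁ p.1
  have hr2 : (rk S₂ p.2 : ℝ) ≤ n := by exact_mod_cast h2 ▸ rk_le_card S₂ p.2
  have hn : (0:ℝ) ≤ n := Nat.cast_nonneg n
  unfold wt
  split_ifs <;> [skip; skip; positivity] <;> (apply div_nonneg <;> linarith)

lemma numeric1 {n t : ℝ} (hn : 1 ≤ n) (ht : t ≤ n) (ht0 : 0 ≤ t) : t / (2*n) ≤ 1 := by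
  rw [div_le_one (by linarith)]; linarith

lemma numeric2 {n r t : ℝ} (hn : 1 ≤ n) (hr : 0 ≤ r) (ht : t ≤ n - 1) (ht0 : 0 ≤ t) :
    (2*n - r)/(4*n) + t/(2*n) ≤ 1 := by
  rw [div_add_div _ _ (by positivity) (by positivity), div_le_one (by positivity)]
  nlinarith

lemma numeric3 {n i j t : ℝ} (hn : 1 ≤ n) (hi : i ≤ 2*n) (hj : j ≤ 2*n)
    (hti : t ≤ i) (htj : t ≤ j) (ht2 : 2 ≤ t) :
    (2*n - i)/(4*n) + (2*n - j)/(4*n) + (t - 2)/(2*n) ≤ 1 := by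
  rw [← add_div, div_add_div _ _ (by positivity) (by positivity),
    div_le_one (by positivity)]
  nlinarith

lemma line_wt_le {S₁ S₂ : Finset ℝ} {n : ℕ} (hn : 1 ≤ n) (h1 : S₁.card = n)
    (h2 : S₂.card = n) (h01 : (0:ℝ) ∈ S₁) (hp1 : ∀ x ∈ S₁, 0 ≤ x)
    (h02 : (0:ℝ) ∈ S₂) (hp2 : ∀ y ∈ S₂, 0 ≤ y)
    (l : Line2) (hc : l.c ≠ 0) :
    ∑ p ∈ ((S₁ ×ˢ S₂).erase (0,0)).filter l.Mem, wt S₁ S₂ n p ≤ 1 := by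
  set T := ((S₁ ×ˢ S₂).erase (0,0)).filter l.Mem with hT
  have hnR : (1:ℝ) ≤ n := by exact_mod_cast hn
  have hTfacts : ∀ p ∈ T, l.Mem p ∧ p ≠ ((0:ℝ),(0:ℝ)) ∧ p.1 ∈ S₁ ∧ p.2 ∈ S₂ ∧
      0 ≤ p.1 ∧ 0 ≤ p.2 := by
    intro p hp
    rw [hT, Finset.mem_filter, Finset.mem_erase, Finset.mem_product] at hp
    exact ⟨hp.2, hp.1.1, hp.1.2.1, hp.1.2.2, hp1 _ hp.1.2.1, hp2 _ hp.1.2.2⟩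
  -- every line meets the grid in at most n points
  have hTcard : T.card ≤ n := by
    by_cases hb : l.b = 0
    · have ha : l.a ≠ 0 := l.nondeg.resolve_right (by simp [hb])
      calc T.card ≤ S₂.card := by
            apply Finset.card_le_card_of_injOn Prod.snd
            · exact fun p hp => (hTfacts p hp).2.2.2.1
            · intro p hp q hq hpq
              have h1' := (hTfacts p hp).1
              have h2' := (hTfacts q hq).1
              rw [Line2.Mem, hb] at h1' h2'
              have : p.1 = q.1 := by
                apply mul_left_cancel₀ ha; linarith
              exact Prod.ext this hpq
        _ = n := h2
    · calc T.card ≤ S₁.card := by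
            apply Finset.card_le_card_of_injOn Prod.fst
            · exact fun p hp => (hTfacts p hp).2.2.1
            · intro p hp q hq hpq
              have h1' := (hTfacts p hp).1
              have h2' := (hTfacts q hq).1
              rw [Line2.Mem] at h1' h2'
              have : p.2 = q.2 := by
                apply mul_left_cancel₀ hb; rw [hpq] at h1'; linarith
              exact Prod.ext hpq this
        _ = n := h1
  -- split the sum
  set Tx := T.filter (fun p => p.2 = 0) with hTxdef
  set T' := T.filter (fun p => ¬ p.2 = 0) with hT'def
  set Ty := T'.filter (fun p => p.1 = 0) with hTydef
  set Ti := T'.filter (fun p => ¬ p.1 = 0) with hTidef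
  have hsplit1 : ∑ p ∈ Tx, wt S₁ S₂ n p + ∑ p ∈ T', wt S₁ S₂ n p
      = ∑ p ∈ T, wt S₁ S₂ n p := Finset.sum_filter_add_sum_filter_not T _ _
  have hsplit2 : ∑ p ∈ Ty, wt S₁ S₂ n p + ∑ p ∈ Ti, wt S₁ S₂ n p
      = ∑ p ∈ T', wt S₁ S₂ n p := Finset.sum_filter_add_sum_filter_not T' _ _
  have hcsplit1 : Tx.card + T'.card = T.card := Finset.card_filter_add_card_filter_not _
  have hcsplit2 : Ty.card + Ti.card = T'.card := Finset.card_filter_add_card_filter_not _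
  -- Ti values
  have hTi : ∑ p ∈ Ti, wt S₁ S₂ n p = Ti.card / (2*n) := by
    rw [Finset.sum_congr rfl (fun p hp => ?_), Finset.sum_const, nsmul_eq_mul, mul_one_div]
    rw [hTidef, Finset.mem_filter, hT'def, Finset.mem_filter] at hp
    show wt S₁ S₂ n p = 1 / (2*n)
    rw [wt, if_neg hp.1.2, if_neg hp.2]
  -- at most one x-axis point
  have hTx1 : Tx.card ≤ 1 := by
    rw [Finset.card_le_one]
    intro p hp q hq
    rw [hTxdef, Finset.mem_filter] at hp hq
    have hpm := (hTfacts p hp.1).1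
    have hqm := (hTfacts q hq.1).1
    rw [Line2.Mem, hp.2] at hpm
    rw [Line2.Mem, hq.2] at hqm
    have ha : l.a ≠ 0 := by
      intro h; rw [h] at hpm; simp at hpm; exact hc hpm.symm
    have : p.1 = q.1 := by apply mul_left_cancel₀ ha; linarith
    exact Prod.ext this (hp.2.trans hq.2.symm)
  have hTy1 : Ty.card ≤ 1 := by
    rw [Finset.card_le_one]
    intro p hp q hq
    rw [hTydef, Finset.mem_filter, hT'def, Finset.mem_filter] at hp hq
    have hpm := (hTfacts p hp.1.1).1
    have hqm := (hTfacts q hq.1.1).1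
    rw [Line2.Mem, hp.2] at hpm
    rw [Line2.Mem, hq.2] at hqm
    have hb : l.b ≠ 0 := by
      intro h; rw [h] at hpm; simp at hpm; exact hc hpm.symm
    have : p.2 = q.2 := by apply mul_left_cancel₀ hb; linarith
    exact Prod.ext (hp.2.trans hq.2.symm) this
  -- the sum in terms of pieces
  rw [← hsplit1, ← hsplit2]
  rcases Nat.le_one_iff_eq_zero_or_eq_one.mp hTx1 with hx0 | hx1 <;>
    rcases Nat.le_one_iff_eq_zero_or_eq_one.mp hTy1 with hy0 | hy1
  · -- no axis points
    rw [Finset.card_eq_zero.mp hx0, Finset.card_eq_zero.mp hy0]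
    simp only [Finset.sum_empty, zero_add, hTi]
    have : (Ti.card : ℝ) ≤ n := by
      have : Ti.card ≤ n := by omega
      exact_mod_cast this
    exact numeric1 hnR this (by positivity)
  · -- only a y-axis point
    rw [Finset.card_eq_zero.mp hx0]
    obtain ⟨q₀, hq₀eq⟩ := Finset.card_eq_one.mp hy1
    have hq₀ : q₀ ∈ Ty := hq₀eq ▸ Finset.mem_singleton_self q₀
    rw [hTydef, Finset.mem_filter, hT'def, Finset.mem_filter] at hq₀
    have hwq : wt S₁ S₂ n q₀ = (2*n - rk S₂ q₀.2)/(4*n) := by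
      rw [wt, if_neg hq₀.1.2, if_pos hq₀.2]
    rw [Finset.sum_empty, zero_add, hq₀eq, Finset.sum_singleton, hwq, hTi]
    have hticard : (Ti.card : ℝ) ≤ (n:ℝ) - 1 := by
      have : Ti.card + 1 ≤ n := by omega
      have := (Nat.cast_le (α := ℝ)).mpr this
      push_cast at this; linarith
    exact numeric2 hnR (by positivity) hticard (by positivity)
  · -- only an x-axis point
    rw [Finset.card_eq_zero.mp hy0]
    obtain ⟨p₀, hp₀eq⟩ := Finset.card_eq_one.mp hx1
    have hp₀ : p₀ ∈ Tx := hp₀eq ▸ Finset.mem_singleton_self p₀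
    rw [hTxdef, Finset.mem_filter] at hp₀
    have hwp : wt S₁ S₂ n p₀ = (2*n - rk S₁ p₀.1)/(4*n) := by
      rw [wt, if_pos hp₀.2]
    rw [Finset.sum_empty, zero_add, hp₀eq, Finset.sum_singleton, hwp, hTi]
    have hticard : (Ti.card : ℝ) ≤ (n:ℝ) - 1 := by
      have : Ti.card + 1 ≤ n := by omega
      have := (Nat.cast_le (α := ℝ)).mpr this
      push_cast at this; linarith
    exact numeric2 hnR (by positivity) hticard (by positivity)
  · -- both an x-axis and a y-axis point : "type A" lines
    obtain ⟨p₀, hp₀eq⟩ := Finset.card_eq_one.mp hx1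
    obtain ⟨q₀, hq₀eq⟩ := Finset.card_eq_one.mp hy1
    have hp₀ : p₀ ∈ Tx := hp₀eq ▸ Finset.mem_singleton_self p₀
    have hq₀ : q₀ ∈ Ty := hq₀eq ▸ Finset.mem_singleton_self q₀
    rw [hTxdef, Finset.mem_filter] at hp₀
    rw [hTydef, Finset.mem_filter, hT'def, Finset.mem_filter] at hq₀
    have hp₀f := hTfacts p₀ hp₀.1
    have hq₀f := hTfacts q₀ hq₀.1.1
    have hx₀ne : p₀.1 ≠ 0 := by
      intro h
      exact hp₀f.2.1 (Prod.ext h hp₀.2)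
    have hx₀pos : 0 < p₀.1 := lt_of_le_of_ne hp₀f.2.2.2.2.1 (Ne.symm hx₀ne)
    have hy₀pos : 0 < q₀.2 := lt_of_le_of_ne hq₀f.2.2.2.2.2 (Ne.symm hq₀.1.2)
    have ha' : l.a * p₀.1 = l.c := by
      have := hp₀f.1; rw [Line2.Mem, hp₀.2] at this; simpa using this
    have hb' : l.b * q₀.2 = l.c := by
      have := hq₀f.1; rw [Line2.Mem, hq₀.2] at this; simpa using this
    have ha : l.a ≠ 0 := by
      intro h; rw [h, zero_mul] at ha'; exact hc ha'.symm
    have hb : l.b ≠ 0 := by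
      intro h; rw [h, zero_mul] at hb'; exact hc hb'.symm
    have hkey : ∀ p ∈ T, p.1 ≤ p₀.1 ∧ p.2 ≤ q₀.2 := by
      intro p hp
      have hf := hTfacts p hp
      have hm := hf.1
      rw [Line2.Mem] at hm
      have hk : l.c * (q₀.2 * p.1) + l.c * (p₀.1 * p.2) = l.c * (p₀.1 * q₀.2) := by
        linear_combination (p₀.1 * q₀.2) * hm - (q₀.2 * p.1) * ha' - (p₀.1 * p.2) * hb'
      have hlin : q₀.2 * p.1 + p₀.1 * p.2 = p₀.1 * q₀.2 := by
        apply mul_left_cancel₀ hc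
        rw [mul_add]; exact hk
      constructor
      · nlinarith [mul_nonneg hx₀pos.le hf.2.2.2.2.2]
      · nlinarith [mul_nonneg hy₀pos.le hf.2.2.2.2.1]
    have hTi' : T.card ≤ rk S₁ p₀.1 := by
      apply Finset.card_le_card_of_injOn Prod.fst
      · intro p hp
        exact Finset.mem_filter.mpr ⟨(hTfacts p hp).2.2.1, (hkey p hp).1⟩
      · intro p hp q hq hpq
        have h1' := (hTfacts p hp).1
        have h2' := (hTfacts q hq).1
        rw [Line2.Mem] at h1' h2'
        have : p.2 = q.2 := by
          apply mul_left_cancel₀ hb; rw [hpq] at h1'; linarith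
        exact Prod.ext hpq this
    have hTj' : T.card ≤ rk S₂ q₀.2 := by
      apply Finset.card_le_card_of_injOn Prod.snd
      · intro p hp
        exact Finset.mem_filter.mpr ⟨(hTfacts p hp).2.2.2.1, (hkey p hp).2⟩
      · intro p hp q hq hpq
        have h1' := (hTfacts p hp).1
        have h2' := (hTfacts q hq).1
        rw [Line2.Mem] at h1' h2'
        have : p.1 = q.1 := by
          apply mul_left_cancel₀ ha; rw [hpq] at h1'; linarith
        exact Prod.ext this hpq
    have hwp : wt S₁ S₂ n p₀ = (2*n - rk S₁ p₀.1)/(4*n) := by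
      rw [wt, if_pos hp₀.2]
    have hwq : wt S₁ S₂ n q₀ = (2*n - rk S₂ q₀.2)/(4*n) := by
      rw [wt, if_neg hq₀.1.2, if_pos hq₀.2]
    rw [hp₀eq, hq₀eq, Finset.sum_singleton, Finset.sum_singleton, hwp, hwq, hTi]
    have hticard : (Ti.card : ℝ) = (T.card : ℝ) - 2 := by
      have : Ti.card + 2 = T.card := by omega
      have := congrArg (Nat.cast (R := ℝ)) this
      push_cast at this; linarith
    rw [hticard]
    have hi2 : ((rk S₁ p₀.1 : ℕ) : ℝ) ≤ 2*n := by
      have : rk S₁ p₀.1 ≤ n := h1 ▸ rk_le_card S₁ p₀.1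
      have := (Nat.cast_le (α := ℝ)).mpr this; linarith
    have hj2 : ((rk S₂ q₀.2 : ℕ) : ℝ) ≤ 2*n := by
      have : rk S₂ q₀.2 ≤ n := h2 ▸ rk_le_card S₂ q₀.2
      have := (Nat.cast_le (α := ℝ)).mpr this; linarith
    have hti : ((T.card : ℕ) : ℝ) ≤ rk S₁ p₀.1 := by exact_mod_cast hTi'
    have htj : ((T.card : ℕ) : ℝ) ≤ rk S₂ q₀.2 := by exact_mod_cast hTj'
    have ht2 : (2:ℝ) ≤ T.card := by
      have : 2 ≤ T.card := by omega
      exact_mod_cast this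
    have := numeric3 hnR hi2 hj2 hti htj ht2
    linarith

lemma axis_sum (S : Finset ℝ) (n : ℕ) (h : S.card = n) (h0 : (0:ℝ) ∈ S)
    (hp : ∀ x ∈ S, 0 ≤ x) :
    ∑ x ∈ S.erase 0, ((2 * (n:ℝ) - rk S x) / (4 * n))
      = (2*(n:ℝ)*n - n*(n+1)/2 - (2*n - 1)) / (4 * n) := by
  have hall : ∑ x ∈ S, ((2 * (n:ℝ) - rk S x) / (4 * n))
      = (2*(n:ℝ)*n - n*(n+1)/2) / (4 * n) := by
    rw [← Finset.sum_div]
    congr 1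
    rw [Finset.sum_sub_distrib, Finset.sum_const, h, nsmul_eq_mul]
    have hs : (∑ x ∈ S, (rk S x : ℝ)) = (n:ℝ)*(n+1)/2 := by
      have := sum_rk S
      rw [h] at this
      have := congrArg (Nat.cast (R := ℝ)) this
      push_cast at this
      linarith
    rw [hs]; ring
  have h3 := Finset.add_sum_erase S (fun x => (2 * (n:ℝ) - rk S x) / (4 * n)) h0
  simp only [rk_zero h0 hp] at h3
  rw [hall] at h3
  rw [sub_div]
  linarith [h3]

lemma total_wt_ge {S₁ S₂ : Finset ℝ} {n : ℕ} (hn : 1 ≤ n) (h1 : S₁.card = n)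
    (h2 : S₂.card = n) (h01 : (0:ℝ) ∈ S₁) (hp1 : ∀ x ∈ S₁, 0 ≤ x)
    (h02 : (0:ℝ) ∈ S₂) (hp2 : ∀ y ∈ S₂, 0 ≤ y) :
    ((n:ℝ) - 1) * (5 * n - 4) / (4 * n) ≤
      ∑ p ∈ (S₁ ×ˢ S₂).erase (0,0), wt S₁ S₂ n p := by
  classical
  set X : Finset (ℝ × ℝ) := (S₁.erase 0) ×ˢ ({0} : Finset ℝ) with hX
  set Y : Finset (ℝ × ℝ) := ({0} : Finset ℝ) ×ˢ (S₂.erase 0) with hY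
  set I : Finset (ℝ × ℝ) := (S₁.erase 0) ×ˢ (S₂.erase 0) with hI
  have hdXY : Disjoint X Y := by
    rw [Finset.disjoint_left]
    rintro ⟨x, y⟩ hx hy
    rw [hX, Finset.mem_product] at hx
    rw [hY, Finset.mem_product] at hy
    exact (Finset.mem_erase.mp hx.1).1 (Finset.mem_singleton.mp hy.1)
  have hdXI : Disjoint (X ∪ Y) I := by
    rw [Finset.disjoint_left]
    rintro ⟨x, y⟩ hx hy
    rw [hI, Finset.mem_product] at hy
    rcases Finset.mem_union.mp hx with h | h
    · rw [hX, Finset.mem_product] at h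
      exact (Finset.mem_erase.mp hy.2).1 (Finset.mem_singleton.mp h.2)
    · rw [hY, Finset.mem_product] at h
      exact (Finset.mem_erase.mp hy.1).1 (Finset.mem_singleton.mp h.1)
  have hsub : X ∪ Y ∪ I ⊆ (S₁ ×ˢ S₂).erase (0,0) := by
    rintro ⟨x, y⟩ h
    rw [Finset.mem_erase, Finset.mem_product]
    rcases Finset.mem_union.mp h with h | h
    · rcases Finset.mem_union.mp h with h | h
      · rw [hX, Finset.mem_product] at h
        obtain ⟨hx, hy⟩ := h
        rw [Finset.mem_erase] at hx
        rw [Finset.mem_singleton] at hy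
        exact ⟨by simp [Prod.ext_iff, hx.1], hx.2, hy ▸ h02⟩
      · rw [hY, Finset.mem_product] at h
        obtain ⟨hx, hy⟩ := h
        rw [Finset.mem_erase] at hy
        rw [Finset.mem_singleton] at hx
        exact ⟨by simp [Prod.ext_iff, hy.1], hx ▸ h01, hy.2⟩
    · rw [hI, Finset.mem_product] at h
      obtain ⟨hx, hy⟩ := h
      rw [Finset.mem_erase] at hx hy
      exact ⟨by simp [Prod.ext_iff, hx.1], hx.2, hy.2⟩
  have hle : ∑ p ∈ X ∪ Y ∪ I, wt S₁ S₂ n p ≤ ∑ p ∈ (S₁ ×ˢ S₂).erase (0,0), wt S₁ S₂ n p :=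
    Finset.sum_le_sum_of_subset_of_nonneg hsub (fun p _ _ => wt_nonneg h1 h2 p)
  refine le_trans ?_ hle
  rw [Finset.sum_union hdXI, Finset.sum_union hdXY]
  have hcard1 : (S₁.erase 0).card = n - 1 := by rw [Finset.card_erase_of_mem h01, h1]
  have hcard2 : (S₂.erase 0).card = n - 1 := by rw [Finset.card_erase_of_mem h02, h2]
  have hXsum : ∑ p ∈ X, wt S₁ S₂ n p
      = (2*(n:ℝ)*n - n*(n+1)/2 - (2*n - 1)) / (4 * n) := by
    rw [hX, Finset.sum_product]
    simp only [Finset.sum_singleton]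
    rw [← axis_sum S₁ n h1 h01 hp1]
    apply Finset.sum_congr rfl
    intro x hx
    rw [wt]
    norm_num
  have hYsum : ∑ p ∈ Y, wt S₁ S₂ n p
      = (2*(n:ℝ)*n - n*(n+1)/2 - (2*n - 1)) / (4 * n) := by
    rw [hY, Finset.sum_product]
    simp only [Finset.sum_singleton]
    rw [← axis_sum S₂ n h2 h02 hp2]
    apply Finset.sum_congr rfl
    intro y hy
    rw [wt]
    rw [if_neg (Finset.mem_erase.mp hy).1, if_pos rfl]
  have hIsum : ∑ p ∈ I, wt S₁ S₂ n p = ((n:ℝ) - 1)^2 / (2 * n) := by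
    rw [hI]
    have : ∀ p ∈ (S₁.erase 0) ×ˢ (S₂.erase 0), wt S₁ S₂ n p = 1 / (2*n) := by
      rintro ⟨x, y⟩ hp
      rw [Finset.mem_product, Finset.mem_erase, Finset.mem_erase] at hp
      rw [wt, if_neg hp.2.1, if_neg hp.1.1]
    rw [Finset.sum_congr rfl this, Finset.sum_const, Finset.card_product, hcard1, hcard2,
      nsmul_eq_mul, mul_one_div]
    have : ((n - 1) * (n - 1) : ℕ) = ((n:ℝ) - 1)^2 := by
      have : (1:ℕ) ≤ n := hn
      push_cast [this]
      ring
    rw [this]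
  rw [hXsum, hYsum, hIsum]
  have hnR : (1:ℝ) ≤ n := by exact_mod_cast hn
  have hn0 : (0:ℝ) < n := by linarith
  rw [← add_div, div_add_div _ _ (by positivity) (by positivity),
    div_le_div_iff₀ (by positivity) (by positivity)]
  ring_nf
  nlinarith [sq_nonneg ((n:ℝ) - 1)]

lemma swap_sum (S₁ S₂ : Finset ℝ) (n : ℕ) (L : Multiset Line2) :
    ∑ p ∈ (S₁ ×ˢ S₂).erase (0,0),
        ((L.filter (fun l => l.Mem p)).card : ℝ) * wt S₁ S₂ n p
      = (L.map (fun l => ∑ p ∈ ((S₁ ×ˢ S₂).erase (0,0)).filter l.Mem,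
          wt S₁ S₂ n p)).sum := by
  induction L using Multiset.induction_on with
  | empty => simp
  | cons l L ih =>
    have hcard : ∀ p : ℝ × ℝ,
        (((l ::ₘ L).filter (fun l' => l'.Mem p)).card : ℝ)
          = (if l.Mem p then (1:ℝ) else 0) + ((L.filter (fun l' => l'.Mem p)).card : ℝ) := by
      intro p
      by_cases h : l.Mem p
      · simp only [Multiset.filter_cons, if_pos h, Multiset.card_add, Multiset.card_singleton]
        push_cast; ring
      · simp [Multiset.filter_cons, if_neg h, h]
    simp only [hcard, add_mul, Finset.sum_add_distrib, ih, Multiset.map_cons,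
      Multiset.sum_cons]
    congr 1
    rw [Finset.sum_filter]
    apply Finset.sum_congr rfl
    intro p _
    by_cases h : l.Mem p <;> simp [h]

lemma cover_card_ge {S₁ S₂ : Finset ℝ} {n : ℕ} (hn : 1 ≤ n) (h1 : S₁.card = n)
    (h2 : S₂.card = n) (h01 : (0:ℝ) ∈ S₁) (hp1 : ∀ x ∈ S₁, 0 ≤ x)
    (h02 : (0:ℝ) ∈ S₂) (hp2 : ∀ y ∈ S₂, 0 ≤ y)
    {k : ℕ} {L : Multiset Line2} (hL : IsKCover (↑(S₁ ×ˢ S₂)) k L) :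
    (k : ℝ) * (((n:ℝ) - 1) * (5 * n - 4) / (4 * n)) ≤ Multiset.card L := by
  have step1 : (k:ℝ) * (((n:ℝ) - 1) * (5 * n - 4) / (4 * n))
      ≤ ∑ p ∈ (S₁ ×ˢ S₂).erase (0,0),
          ((L.filter (fun l => l.Mem p)).card : ℝ) * wt S₁ S₂ n p := by
    calc (k:ℝ) * (((n:ℝ) - 1) * (5 * n - 4) / (4 * n))
        ≤ (k:ℝ) * ∑ p ∈ (S₁ ×ˢ S₂).erase (0,0), wt S₁ S₂ n p :=
          mul_le_mul_of_nonneg_left (total_wt_ge hn h1 h2 h01 hp1 h02 hp2)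
            (Nat.cast_nonneg k)
      _ = ∑ p ∈ (S₁ ×ˢ S₂).erase (0,0), (k:ℝ) * wt S₁ S₂ n p := Finset.mul_sum _ _ _
      _ ≤ _ := by
          apply Finset.sum_le_sum
          intro p hp
          rw [Finset.mem_erase] at hp
          have hk := hL.2 p (by exact_mod_cast hp.2) hp.1
          exact mul_le_mul_of_nonneg_right (by exact_mod_cast hk) (wt_nonneg h1 h2 p)
  rw [swap_sum S₁ S₂ n L] at step1
  refine le_trans step1 ?_
  calc (L.map (fun l => ∑ p ∈ ((S₁ ×ˢ S₂).erase (0,0)).filter l.Mem,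
          wt S₁ S₂ n p)).sum
      ≤ (L.map (fun _ => (1:ℝ))).sum := by
        apply Multiset.sum_map_le_sum_map
        intro l hl
        have hc : l.c ≠ 0 := by
          intro h
          exact hL.1 l hl (by rw [Line2.Mem]; simp [h])
        exact line_wt_le hn h1 h2 h01 hp1 h02 hp2 l hc
    _ = Multiset.card L := by
        rw [Multiset.map_const', Multiset.sum_replicate, nsmul_eq_mul, mul_one]

noncomputable def pline (p : ℝ × ℝ) : Line2 :=
  if p.1 = 0 then ⟨0, 1, p.2, Or.inr one_ne_zero⟩ else ⟨1, 0, p.1, Or.inl one_ne_zero⟩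

lemma pline_mem (p : ℝ × ℝ) : (pline p).Mem p := by
  rw [pline]
  by_cases h : p.1 = 0 <;> simp [h, Line2.Mem]

lemma pline_not_origin (p : ℝ × ℝ) (hp : p ≠ (0,0)) : ¬ (pline p).Mem (0,0) := by
  rw [pline]
  by_cases h : p.1 = 0
  · rw [if_pos h]
    intro h2
    rw [Line2.Mem] at h2
    simp only at h2
    exact hp (Prod.ext h (by simpa using h2.symm))
  · rw [if_neg h]
    intro h2
    rw [Line2.Mem] at h2
    simp only at h2
    exact h (by simpa using h2.symm)

lemma cover_exists_s18 (S₁ S₂ : Finset ℝ) (k : ℕ) :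
    ∃ L : Multiset Line2, IsKCover (↑(S₁ ×ˢ S₂)) k L := by
  refine ⟨((S₁ ×ˢ S₂).erase (0,0)).val.bind
    (fun p => Multiset.replicate k (pline p)), ?_, ?_⟩
  · intro l hl
    rw [Multiset.mem_bind] at hl
    obtain ⟨p, hp, hl⟩ := hl
    rw [Multiset.eq_of_mem_replicate hl]
    have hp' : p ∈ (S₁ ×ˢ S₂).erase (0,0) := hp
    exact pline_not_origin p (Finset.mem_erase.mp hp').1
  · intro p hp hne
    have hp' : p ∈ ((S₁ ×ˢ S₂).erase (0,0)).val := by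
      rw [← Finset.mem_def, Finset.mem_erase]
      exact ⟨hne, by exact_mod_cast hp⟩
    obtain ⟨s, hs⟩ := Multiset.exists_cons_of_mem hp'
    rw [hs, Multiset.cons_bind, Multiset.filter_add, Multiset.card_add]
    have : Multiset.filter (fun l => l.Mem p) (Multiset.replicate k (pline p))
        = Multiset.replicate k (pline p) := by
      apply Multiset.filter_eq_self.mpr
      intro l hl
      rw [Multiset.eq_of_mem_replicate hl]
      exact pline_mem p
    rw [this, Multiset.card_replicate]
    exact Nat.le_add_right k _

theorem stmt18 :
    ∀ ε : ℝ, 0 < ε → ∃ N : ℕ, ∀ n : ℕ, N ≤ n →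
      ∀ S₁ S₂ : Finset ℝ, S₁.card = n → S₂.card = n →
        (0 : ℝ) ∈ S₁ → (∀ x ∈ S₁, (0 : ℝ) ≤ x) →
        (0 : ℝ) ∈ S₂ → (∀ y ∈ S₂, (0 : ℝ) ≤ y) →
        ∀ k : ℕ, 2 ≤ k →
          (4 - 2 * Real.sqrt 2 - ε) * ((k : ℝ) * ((n : ℝ) - 1))
            ≤ (cov (↑(S₁ ×ˢ S₂)) k : ℝ) := by
  intro ε hε
  refine ⟨13, fun n hn S₁ S₂ h1 h2 h01 hp1 h02 hp2 k hk => ?_⟩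
  have hn1 : 1 ≤ n := le_trans (by norm_num) hn
  -- the infimum is attained
  obtain ⟨L₀, hL₀⟩ := cover_exists_s18 S₁ S₂ k
  have hne : {m | ∃ L : Multiset Line2, IsKCover (↑(S₁ ×ˢ S₂)) k L ∧
      Multiset.card L = m}.Nonempty := ⟨Multiset.card L₀, L₀, hL₀, rfl⟩
  obtain ⟨L, hL, hcard⟩ := Nat.sInf_mem hne
  have hcov : (cov (↑(S₁ ×ˢ S₂)) k : ℝ) = Multiset.card L := by
    rw [cov, ← hcard]
  rw [hcov]
  have key := cover_card_ge hn1 h1 h2 h01 hp1 h02 hp2 hL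
  refine le_trans ?_ key
  -- numerical comparison
  have hnr : (13:ℝ) ≤ n := by exact_mod_cast hn
  have hn0 : (0:ℝ) < n := by linarith
  have hs : (1.414 : ℝ) < Real.sqrt 2 := by
    nlinarith [Real.sq_sqrt (show (0:ℝ) ≤ 2 by norm_num), Real.sqrt_nonneg 2]
  have hk0 : (0:ℝ) ≤ k := Nat.cast_nonneg k
  have hfrac : (4 - 2 * Real.sqrt 2 - ε) * ((n:ℝ) - 1)
      ≤ ((n:ℝ) - 1) * (5 * n - 4) / (4 * n) := by
    rw [le_div_iff₀ (by positivity)]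
    nlinarith [mul_nonneg (show (0:ℝ) ≤ (n:ℝ) - 1 by linarith)
        (show (0:ℝ) ≤ ε * (4*n) by positivity),
      mul_nonneg (show (0:ℝ) ≤ (n:ℝ) - 1 by linarith)
        (show (0:ℝ) ≤ (Real.sqrt 2 - 1.414) * (8*n) by nlinarith)]
  calc (4 - 2 * Real.sqrt 2 - ε) * ((k : ℝ) * ((n : ℝ) - 1))
      = (k:ℝ) * ((4 - 2 * Real.sqrt 2 - ε) * ((n:ℝ) - 1)) := by ring
    _ ≤ (k:ℝ) * (((n:ℝ) - 1) * (5 * n - 4) / (4 * n)) :=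
        mul_le_mul_of_nonneg_left hfrac hk0
end
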